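/- arXiv:2509.13452 — 13 statements merged into one kernel-verified Lean document; each statement's English description precedes it below -/
import Mathlib

section
/- A unitary n×n complex matrix k admits a factorization k = l·u with l ∈ L and u ∈ U if and only if every leading principal minor of k is a strictly positive real number. (In particular every such k automatically has determinant 1.) -/
open Matrix

/-- `L`: lower unitriangular `n × n` complex matrices. -/
def IsLowerUni {n : ℕ} (l : Matrix (Fin n) (Fin n) ℂ) : Prop :=
  (∀ i, l i i = 1) ∧ ∀ i j : Fin n, i < j → l i j = 0

/-- `U`: upper triangular `n × n` complex matrices with strictly positive real diagonal. -/
def IsUpperPos {n : ℕ} (u : Matrix (Fin n) (Fin n) ℂ) : Prop :=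
  (∀ i, 0 < (u i i).re ∧ (u i i).im = 0) ∧ ∀ i j : Fin n, j < i → u i j = 0

/-- A matrix is unitary if `k* · k = 1`. -/
def IsUnitaryMat {n : ℕ} (k : Matrix (Fin n) (Fin n) ℂ) : Prop :=
  kᴴ * k = 1

/-- The leading principal minor of order `m`: the determinant of the top-left
`m × m` submatrix. -/
def leadMinor {n : ℕ} (A : Matrix (Fin n) (Fin n) ℂ) (m : ℕ) (h : m ≤ n) : ℂ :=
  (A.submatrix (Fin.castLE h) (Fin.castLE h)).det

/- ### Auxiliary lemmas -/

theorem posR_iff (z : ℂ) : (0 < z.re ∧ z.im = 0) ↔ ∃ r : ℝ, 0 < r ∧ z = r := by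
  constructor
  · rintro ⟨h1, h2⟩
    exact ⟨z.re, h1, by rw [Complex.ext_iff]; simp [h2]⟩
  · rintro ⟨r, hr, rfl⟩
    simp [hr]

/-- Leading block of a product where the left factor is lower triangular. -/
theorem submul {n m : ℕ} (h : m ≤ n) (A B : Matrix (Fin n) (Fin n) ℂ)
    (hA : ∀ i j : Fin n, i < j → A i j = 0) :
    (A * B).submatrix (Fin.castLE h) (Fin.castLE h)
      = A.submatrix (Fin.castLE h) (Fin.castLE h) * B.submatrix (Fin.castLE h) (Fin.castLE h) := by
  ext i j
  simp only [submatrix_apply, mul_apply]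
  have hm := Finset.sum_map (Finset.univ : Finset (Fin m)) (Fin.castLEEmb h)
    (fun t => A (Fin.castLE h i) t * B t (Fin.castLE h j))
  simp only [Fin.castLEEmb_apply] at hm
  rw [← hm]
  apply (Finset.sum_subset (Finset.subset_univ _) ?_).symm
  intro t _ ht
  have : ¬ t.val < m := by
    intro hlt
    exact ht (Finset.mem_map.2 ⟨⟨t.val, hlt⟩, Finset.mem_univ _, by simp [Fin.castLEEmb]⟩)
  rw [hA _ _ (by simpa [Fin.lt_def] using lt_of_lt_of_le i.isLt (not_lt.1 this)), zero_mul]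

/-- Leading minor of a lower-unitriangular matrix is 1. -/
theorem lead_lowerUni {n m : ℕ} (h : m ≤ n) (A : Matrix (Fin n) (Fin n) ℂ)
    (hA : IsLowerUni A) :
    (A.submatrix (Fin.castLE h) (Fin.castLE h)).det = 1 := by
  have hbt : (A.submatrix (Fin.castLE h) (Fin.castLE h)).BlockTriangular OrderDual.toDual :=
    fun i j hij => hA.2 (Fin.castLE h i) (Fin.castLE h j) hij
  rw [Matrix.det_of_lowerTriangular _ hbt]
  simp [hA.1]

/-- Leading minor of an upper triangular matrix is the product of leading diagonal entries. -/
theorem lead_upper {n m : ℕ} (h : m ≤ n) (A : Matrix (Fin n) (Fin n) ℂ)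
    (hA : ∀ i j : Fin n, j < i → A i j = 0) :
    (A.submatrix (Fin.castLE h) (Fin.castLE h)).det
      = ∏ a : Fin m, A (Fin.castLE h a) (Fin.castLE h a) := by
  have hbt : (A.submatrix (Fin.castLE h) (Fin.castLE h)).BlockTriangular id :=
    fun i j hij => hA (Fin.castLE h i) (Fin.castLE h j) hij
  rw [Matrix.det_of_upperTriangular hbt]
  rfl

theorem posR_prod {m : ℕ} (f : Fin m → ℂ) (hf : ∀ a, 0 < (f a).re ∧ (f a).im = 0) :
    0 < (∏ a, f a).re ∧ (∏ a, f a).im = 0 := by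
  rw [posR_iff]
  have hfa : ∀ a, f a = ((f a).re : ℂ) := fun a => by
    rw [Complex.ext_iff]; simp [(hf a).2]
  refine ⟨∏ a, (f a).re, Finset.prod_pos (fun a _ => (hf a).1) , ?_⟩
  rw [Finset.prod_congr rfl (fun a _ => hfa a)]
  push_cast
  rfl

/-- Forward direction: leading minors of a product `l * u` are positive reals. -/
theorem forward_lemma {n : ℕ} (l u : Matrix (Fin n) (Fin n) ℂ)
    (hl : IsLowerUni l) (hu : IsUpperPos u) (m : ℕ) (h : m ≤ n) :
    0 < (leadMinor (l * u) m h).re ∧ (leadMinor (l * u) m h).im = 0 := by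
  unfold leadMinor
  rw [submul h l u hl.2, det_mul, lead_lowerUni h l hl, one_mul, lead_upper h u hu.2]
  exact posR_prod _ (fun a => hu.1 _)

/-- The elimination matrix: lower unitriangular, kills below-diagonal entries. -/
noncomputable def Wmat {n : ℕ} (k : Matrix (Fin n) (Fin n) ℂ) : Matrix (Fin n) (Fin n) ℂ :=
  fun i j =>
    if hj : j.val < i.val then
      vecMul (fun t : Fin i.val => -k i (Fin.castLE i.isLt.le t))
        (k.submatrix (Fin.castLE i.isLt.le) (Fin.castLE i.isLt.le))⁻¹ ⟨j.val, hj⟩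
    else if j = i then 1 else 0

theorem Wmat_diag {n : ℕ} (k : Matrix (Fin n) (Fin n) ℂ) (i : Fin n) : Wmat k i i = 1 := by
  simp [Wmat]

theorem Wmat_upper {n : ℕ} (k : Matrix (Fin n) (Fin n) ℂ) (i j : Fin n) (hij : i < j) :
    Wmat k i j = 0 := by
  have h1 : ¬ j.val < i.val := by rw [← Fin.lt_def]; exact not_lt.2 hij.le
  simp [Wmat, h1, Fin.ne_of_gt hij]

theorem Wmat_lowerUni {n : ℕ} (k : Matrix (Fin n) (Fin n) ℂ) : IsLowerUni (Wmat k) :=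
  ⟨Wmat_diag k, Wmat_upper k⟩

theorem Wmat_mul_upper {n : ℕ} (k : Matrix (Fin n) (Fin n) ℂ)
    (hΔ : ∀ (m : ℕ) (h : m ≤ n), leadMinor k m h ≠ 0) (i t : Fin n) (ht : t < i) :
    (Wmat k * k) i t = 0 := by
  set m := i.val with hm
  set K := k.submatrix (Fin.castLE i.isLt.le) (Fin.castLE i.isLt.le) with hK
  have hdK : IsUnit K.det := isUnit_iff_ne_zero.2 (hΔ m i.isLt.le)
  have htv : t.val < m := ht
  set t' : Fin m := ⟨t.val, htv⟩ with ht'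
  have htc : t = Fin.castLE i.isLt.le t' := Fin.ext rfl
  set c : Fin m → ℂ := fun a => -k i (Fin.castLE i.isLt.le a) with hc
  have key : vecMul (vecMul c K⁻¹) K = c := by
    rw [vecMul_vecMul, Matrix.nonsing_inv_mul K hdK, vecMul_one]
  have hsub : (insert i (Finset.univ.map (Fin.castLEEmb i.isLt.le))) ⊆ Finset.univ :=
    Finset.subset_univ _
  have hvanish : ∀ j ∈ Finset.univ,
      j ∉ insert i (Finset.univ.map (Fin.castLEEmb i.isLt.le)) → Wmat k i j * k j t = 0 := by
    intro j _ hj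
    have hji : j ≠ i := fun h => hj (by simp [h])
    have hjm : ¬ j.val < m := by
      intro hlt
      exact hj (Finset.mem_insert_of_mem
        (Finset.mem_map.2 ⟨⟨j.val, hlt⟩, Finset.mem_univ _, by simp [Fin.castLEEmb]⟩))
    have hij : i < j := by
      rcases lt_or_eq_of_le (not_lt.1 hjm) with h' | h'
      · exact h'
      · exact absurd (Fin.ext h'.symm : j = i) hji
    rw [Wmat_upper k i j hij, zero_mul]
  have hinotin : i ∉ Finset.univ.map (Fin.castLEEmb i.isLt.le) := by
    intro hmem
    rcases Finset.mem_map.1 hmem with ⟨a, _, ha⟩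
    have hav : a.val = i.val := congrArg Fin.val ha
    exact absurd (hav ▸ a.isLt) (lt_irrefl _)
  have hWc : ∀ a : Fin m, Wmat k i ((Fin.castLEEmb i.isLt.le) a) = vecMul c K⁻¹ a := by
    intro a
    have hav : ((Fin.castLEEmb i.isLt.le) a).val < m := a.isLt
    simp only [Wmat, dif_pos (show ((Fin.castLEEmb i.isLt.le) a).val < i.val from a.isLt)]
    congr 1
  calc (Wmat k * k) i t
      = ∑ j : Fin n, Wmat k i j * k j t := mul_apply
    _ = ∑ j ∈ insert i (Finset.univ.map (Fin.castLEEmb i.isLt.le)), Wmat k i j * k j t :=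
        (Finset.sum_subset hsub hvanish).symm
    _ = Wmat k i i * k i t
          + ∑ a : Fin m, Wmat k i ((Fin.castLEEmb i.isLt.le) a)
              * k ((Fin.castLEEmb i.isLt.le) a) t := by
        rw [Finset.sum_insert hinotin, Finset.sum_map]
    _ = k i t + ∑ a : Fin m, vecMul c K⁻¹ a * K a t' := by
        rw [Wmat_diag, one_mul]
        congr 1
        refine Finset.sum_congr rfl (fun a _ => ?_)
        rw [hWc a]
        rfl
    _ = k i t + vecMul (vecMul c K⁻¹) K t' := rfl
    _ = 0 := by
        rw [key]
        simp only [hc, htc]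
        ring

/-- Main theorem. -/
theorem stmt0 (n : ℕ) (hn : 0 < n) (k : Matrix (Fin n) (Fin n) ℂ)
    (hk : IsUnitaryMat k) :
    ((∃ l u : Matrix (Fin n) (Fin n) ℂ,
        IsLowerUni l ∧ IsUpperPos u ∧ k = l * u) ↔
      (∀ (m : ℕ) (h : m ≤ n),
        0 < (leadMinor k m h).re ∧ (leadMinor k m h).im = 0)) ∧
    ((∃ l u : Matrix (Fin n) (Fin n) ℂ,
        IsLowerUni l ∧ IsUpperPos u ∧ k = l * u) → k.det = 1) := by
  have fwd : (∃ l u : Matrix (Fin n) (Fin n) ℂ,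
      IsLowerUni l ∧ IsUpperPos u ∧ k = l * u) →
      ∀ (m : ℕ) (h : m ≤ n),
        0 < (leadMinor k m h).re ∧ (leadMinor k m h).im = 0 := by
    rintro ⟨l, u, hl, hu, rfl⟩ m h
    exact forward_lemma l u hl hu m h
  have hlead_det : leadMinor k n le_rfl = k.det := by
    unfold leadMinor
    have hcast : Fin.castLE (le_refl n) = id := funext (fun x => Fin.ext rfl)
    rw [hcast, submatrix_id_id]
  constructor
  · constructor
    · exact fwd
    · -- reverse: construct the LU decomposition via Gaussian elimination
      intro hpos
      have hΔ : ∀ (m : ℕ) (h : m ≤ n), leadMinor k m h ≠ 0 := by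
        intro m h h0
        have := (hpos m h).1
        rw [h0] at this
        simp at this
      have hWl : IsLowerUni (Wmat k) := Wmat_lowerUni k
      have hWdet : (Wmat k).det = 1 := by
        rw [Matrix.det_of_lowerTriangular _
          (fun i j (hij : i < j) => hWl.2 _ _ hij)]
        simp [hWl.1]
      have hWunit : IsUnit (Wmat k).det := by rw [hWdet]; exact isUnit_one
      have huup : ∀ i j : Fin n, j < i → (Wmat k * k) i j = 0 := fun i j hij =>
        Wmat_mul_upper k hΔ i j hij
      -- leading minors of u coincide with those of k
      have hlead : ∀ (m : ℕ) (h : m ≤ n),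
          leadMinor (Wmat k * k) m h = leadMinor k m h := by
        intro m h
        unfold leadMinor
        rw [submul h (Wmat k) k hWl.2, det_mul, lead_lowerUni h (Wmat k) hWl, one_mul]
      have hleadu : ∀ (m : ℕ) (h : m ≤ n),
          leadMinor (Wmat k * k) m h
            = ∏ a : Fin m, (Wmat k * k) (Fin.castLE h a) (Fin.castLE h a) := by
        intro m h
        exact lead_upper h (Wmat k * k) huup
      -- diagonal of u is positive real
      have hudiag : ∀ i : Fin n,
          0 < ((Wmat k * k) i i).re ∧ ((Wmat k * k) i i).im = 0 := by
        intro i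
        have h1 : (i : ℕ) + 1 ≤ n := i.isLt
        have h0 : (i : ℕ) ≤ n := le_of_lt i.isLt
        rcases (posR_iff _).1 (hpos ((i : ℕ) + 1) h1) with ⟨b, hb, hbe⟩
        rcases (posR_iff _).1 (hpos (i : ℕ) h0) with ⟨a, ha, hae⟩
        have ec : ∀ x : Fin (i : ℕ), Fin.castLE h1 x.castSucc = Fin.castLE h0 x :=
          fun x => Fin.ext rfl
        have el : Fin.castLE h1 (Fin.last (i : ℕ)) = i := Fin.ext rfl
        have E : (b : ℂ) = (a : ℂ) * (Wmat k * k) i i := by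
          rw [← hbe, ← hae, ← hlead _ h1, ← hlead _ h0, hleadu _ h1, hleadu _ h0,
            Fin.prod_univ_castSucc]
          simp only [ec, el]
        have ha0 : (a : ℂ) ≠ 0 := by
          exact_mod_cast ne_of_gt ha
        have hui : (Wmat k * k) i i = ((b / a : ℝ) : ℂ) := by
          rw [Complex.ofReal_div, E, mul_div_cancel_left₀ _ ha0]
        rw [posR_iff]
        exact ⟨b / a, div_pos hb ha, hui⟩
      -- assemble the decomposition
      have hinv : Invertible (Wmat k) := (Wmat k).invertibleOfIsUnitDet hWunit
      have hinvlow : BlockTriangular (Wmat k)⁻¹ OrderDual.toDual :=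
        blockTriangular_inv_of_blockTriangular
          (fun i j (hij : i < j) => hWl.2 _ _ hij)
      refine ⟨(Wmat k)⁻¹, Wmat k * k, ⟨?_, ?_⟩, ⟨hudiag, huup⟩, ?_⟩
      · intro i
        have h1 : ((Wmat k)⁻¹ * Wmat k) i i = 1 := by
          rw [Matrix.nonsing_inv_mul (Wmat k) hWunit]; simp
        rw [mul_apply, Finset.sum_eq_single i ?_ (fun h => absurd (Finset.mem_univ i) h)] at h1
        · rw [hWl.1 i, mul_one] at h1
          exact h1
        · intro b _ hbi
          rcases lt_or_gt_of_ne hbi with h' | h'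
          · rw [hWl.2 _ _ h', mul_zero]
          · rw [hinvlow h', zero_mul]
      · intro i j hij
        exact hinvlow hij
      · rw [← mul_assoc, Matrix.nonsing_inv_mul (Wmat k) hWunit, one_mul]
  · intro hex
    have hpos := fwd hex n le_rfl
    rw [hlead_det] at hpos
    rcases (posR_iff _).1 hpos with ⟨r, hr, hdet⟩
    have hdd : kᴴ.det * k.det = 1 := by rw [← det_mul, hk, det_one]
    rw [det_conjTranspose, hdet] at hdd
    have hrr : (r : ℂ) * r = 1 := by
      rw [← hdd]; simp [RCLike.star_def]
    have hr2 : r * r = 1 := by exact_mod_cast hrr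
    have hr1 : r = 1 := by nlinarith
    rw [hdet, hr1, Complex.ofReal_one]
end

section
/- The Chevalley big cell is invariant under inversion: if a unitary n×n complex matrix k admits a factorization k = l·u with l ∈ L and u ∈ U, then k⁻¹ also admits a factorization k⁻¹ = l'·u' with l' ∈ L and u' ∈ U. -/
open Matrix

/-- The Chevalley big cell is invariant under inversion: if a unitary matrix `k`
factors as `k = l·u` with `l ∈ L`, `u ∈ U`, then so does `k⁻¹`. -/
theorem stmt1 (n : ℕ) (hn : 0 < n) (k : Matrix (Fin n) (Fin n) ℂ)
    (hk : IsUnitaryMat k)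
    (h : ∃ l u : Matrix (Fin n) (Fin n) ℂ, IsLowerUni l ∧ IsUpperPos u ∧ k = l * u) :
    ∃ l' u' : Matrix (Fin n) (Fin n) ℂ, IsLowerUni l' ∧ IsUpperPos u' ∧ k⁻¹ = l' * u' := by
  obtain ⟨l, u, hl, hu, hkeq⟩ := h
  have hne : ∀ i, u i i ≠ 0 := by
    intro i h0
    have := (hu.1 i).1
    rw [h0] at this
    simp at this
  have hconj : ∀ i, (starRingEnd ℂ) (u i i) = u i i := by
    intro i
    exact Complex.conj_eq_iff_im.2 (hu.1 i).2
  have hinv : k⁻¹ = kᴴ := Matrix.inv_eq_left_inv hk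
  refine ⟨uᴴ * Matrix.diagonal (fun i => (u i i)⁻¹),
    Matrix.diagonal (fun i => u i i) * lᴴ, ⟨?_, ?_⟩, ⟨?_, ?_⟩, ?_⟩
  · intro i
    simp [Matrix.mul_diagonal, Matrix.conjTranspose_apply, hconj i,
      mul_inv_cancel₀ (hne i)]
  · intro i j hij
    simp [Matrix.mul_diagonal, Matrix.conjTranspose_apply, hu.2 j i hij]
  · intro i
    simp [Matrix.diagonal_mul, Matrix.conjTranspose_apply, hl.1 i]
    exact ⟨(hu.1 i).1, (hu.1 i).2⟩
  · intro i j hji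
    simp [Matrix.diagonal_mul, Matrix.conjTranspose_apply, hl.2 j i hji]
  · rw [hinv, hkeq, Matrix.conjTranspose_mul, Matrix.mul_assoc,
      ← Matrix.mul_assoc (Matrix.diagonal _) (Matrix.diagonal _),
      Matrix.diagonal_mul_diagonal]
    have : (fun i => (u i i)⁻¹ * u i i) = fun _ => (1 : ℂ) := by
      funext i; exact inv_mul_cancel₀ (hne i)
    rw [this, Matrix.diagonal_one, Matrix.one_mul]
end

section
/- Let Λ be a diagonal n×n complex matrix with pairwise distinct diagonal entries. Then the conjugation orbit of Λ under the group L equals the affine slice of Λ: {l·Λ·l⁻¹ : l ∈ L} = {Λ + Y : Y a strictly lower triangular n×n complex matrix}. -/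
open Matrix

/-- A matrix is strictly lower triangular if all entries on or above the diagonal vanish. -/
def IsStrictLower {n : ℕ} (Y : Matrix (Fin n) (Fin n) ℂ) : Prop :=
  ∀ i j : Fin n, i ≤ j → Y i j = 0

/-- Rows of the conjugating lower unitriangular matrix, built by recursion on the row index. -/
noncomputable def rowL {n : ℕ} (d : Fin n → ℂ) (Y : Matrix (Fin n) (Fin n) ℂ) :
    Fin n → Fin n → ℂ
  | i => fun j =>
    if i = j then 1
    else if i < j then 0
    else (∑ k ∈ (Finset.Ico j i).attach, Y i k.1 * rowL d Y k.1 j) / (d j - d i)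
  termination_by i => (i : ℕ)
  decreasing_by
    exact Fin.lt_iff_val_lt_val.mp (Finset.mem_Ico.mp k.2).2

theorem rowL_diag {n : ℕ} (d : Fin n → ℂ) (Y : Matrix (Fin n) (Fin n) ℂ) (i : Fin n) :
    rowL d Y i i = 1 := by rw [rowL]; simp

theorem rowL_upper {n : ℕ} (d : Fin n → ℂ) (Y : Matrix (Fin n) (Fin n) ℂ) {i j : Fin n}
    (h : i < j) : rowL d Y i j = 0 := by rw [rowL]; simp [h.ne, h]

theorem rowL_lower {n : ℕ} (d : Fin n → ℂ) (Y : Matrix (Fin n) (Fin n) ℂ) {i j : Fin n}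
    (h : j < i) : rowL d Y i j =
      (∑ k ∈ Finset.Ico j i, Y i k * rowL d Y k j) / (d j - d i) := by
  rw [rowL]
  simp only [h.ne', if_false, (not_lt.mpr h.le), if_neg]
  rw [Finset.sum_attach (Finset.Ico j i) (fun k => Y i k * rowL d Y k j)]

theorem key_eq {n : ℕ} (d : Fin n → ℂ) (hd : Function.Injective d)
    (Y : Matrix (Fin n) (Fin n) ℂ) (hY : IsStrictLower Y) :
    (Matrix.diagonal d + Y) * Matrix.of (rowL d Y) =
      Matrix.of (rowL d Y) * Matrix.diagonal d := by
  ext i j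
  rw [Matrix.mul_apply, Matrix.mul_apply]
  have hsum : ∀ k : Fin n, (Matrix.diagonal d + Y) i k * rowL d Y k j =
      Matrix.diagonal d i k * rowL d Y k j + Y i k * rowL d Y k j := by
    intro k; rw [Matrix.add_apply]; ring
  simp only [Matrix.of_apply, hsum, Finset.sum_add_distrib]
  have h1 : ∑ k, Matrix.diagonal d i k * rowL d Y k j = d i * rowL d Y i j := by
    rw [Finset.sum_eq_single i]
    · simp
    · intro k _ hk; simp [Matrix.diagonal_apply_ne' _ hk]
    · simp
  have h2 : ∑ k, Y i k * rowL d Y k j = ∑ k ∈ Finset.Ico j i, Y i k * rowL d Y k j := by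
    refine (Finset.sum_subset (Finset.subset_univ _) ?_).symm
    intro k _ hk
    rw [Finset.mem_Ico, not_and_or, not_le, not_lt] at hk
    rcases hk with hk | hk
    · rw [rowL_upper d Y hk, mul_zero]
    · rw [hY i k hk, zero_mul]
  have h3 : ∑ k, rowL d Y i k * Matrix.diagonal d k j = rowL d Y i j * d j := by
    rw [Finset.sum_eq_single j]
    · simp
    · intro k _ hk; simp [Matrix.diagonal_apply_ne _ hk]
    · simp
  rw [h1, h2, h3]
  rcases lt_trichotomy i j with h | h | h
  · rw [rowL_upper d Y h, Finset.Ico_eq_empty (not_lt.mpr h.le)]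
    simp
  · subst h; rw [Finset.Ico_self]; simp [rowL_diag]
  · rw [rowL_lower d Y h]
    have hne : d j - d i ≠ 0 := sub_ne_zero.mpr (fun e => h.ne (hd e))
    field_simp
    ring

theorem lowerUni_bt {n : ℕ} {l : Matrix (Fin n) (Fin n) ℂ}
    (h : ∀ i j : Fin n, i < j → l i j = 0) :
    l.BlockTriangular OrderDual.toDual := fun i j hij => h i j hij

theorem bt_mul_diag {n : ℕ} {A B : Matrix (Fin n) (Fin n) ℂ}
    (hA : A.BlockTriangular (OrderDual.toDual : Fin n → (Fin n)ᵒᵈ))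
    (hB : B.BlockTriangular (OrderDual.toDual : Fin n → (Fin n)ᵒᵈ)) (i : Fin n) :
    (A * B) i i = A i i * B i i := by
  rw [Matrix.mul_apply, Finset.sum_eq_single i]
  · intro k _ hk
    rcases lt_or_gt_of_ne hk with h | h
    · rw [hB (show OrderDual.toDual i < OrderDual.toDual k from h), mul_zero]
    · rw [hA (show OrderDual.toDual k < OrderDual.toDual i from h), zero_mul]
  · simp

theorem lowerUni_det {n : ℕ} {l : Matrix (Fin n) (Fin n) ℂ} (h : IsLowerUni l) :
    l.det = 1 := by
  rw [Matrix.det_of_lowerTriangular l (lowerUni_bt h.2)]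
  simp [h.1]

/-- For a diagonal matrix `Λ` with pairwise distinct diagonal entries, the `L`-conjugation
orbit of `Λ` equals the affine slice `Λ + (strictly lower triangular matrices)`. -/
theorem stmt4 (n : ℕ) (hn : 0 < n) (d : Fin n → ℂ) (hd : Function.Injective d) :
    {X : Matrix (Fin n) (Fin n) ℂ |
        ∃ l : Matrix (Fin n) (Fin n) ℂ, IsLowerUni l ∧ X = l * Matrix.diagonal d * l⁻¹} =
      {X : Matrix (Fin n) (Fin n) ℂ |
        ∃ Y : Matrix (Fin n) (Fin n) ℂ, IsStrictLower Y ∧ X = Matrix.diagonal d + Y} := by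
  ext X
  simp only [Set.mem_setOf_eq]
  constructor
  · rintro ⟨l, ⟨hldiag, hllow⟩, rfl⟩
    have hbt : l.BlockTriangular OrderDual.toDual := lowerUni_bt hllow
    have hdet : IsUnit l.det := by rw [lowerUni_det ⟨hldiag, hllow⟩]; exact isUnit_one
    have : Invertible l := l.invertibleOfIsUnitDet hdet
    have hinv : l⁻¹.BlockTriangular OrderDual.toDual :=
      Matrix.blockTriangular_inv_of_blockTriangular hbt
    have hdbt : (Matrix.diagonal d).BlockTriangular
        (OrderDual.toDual : Fin n → (Fin n)ᵒᵈ) := Matrix.blockTriangular_diagonal d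
    have hXbt : (l * Matrix.diagonal d * l⁻¹).BlockTriangular OrderDual.toDual :=
      (hbt.mul hdbt).mul hinv
    have hldiaginv : ∀ i, l⁻¹ i i = 1 := by
      intro i
      have h1 : (l * l⁻¹) i i = 1 := by rw [Matrix.mul_nonsing_inv l hdet]; simp
      rwa [bt_mul_diag hbt hinv, hldiag, one_mul] at h1
    have hXdiag : ∀ i, (l * Matrix.diagonal d * l⁻¹) i i = d i := by
      intro i
      rw [bt_mul_diag (hbt.mul hdbt) hinv, bt_mul_diag hbt hdbt, hldiag, hldiaginv]
      simp
    refine ⟨l * Matrix.diagonal d * l⁻¹ - Matrix.diagonal d, ?_, by abel⟩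
    intro i j hij
    rcases hij.lt_or_eq with h | h
    · rw [Matrix.sub_apply, hXbt (show OrderDual.toDual j < OrderDual.toDual i from h),
        Matrix.diagonal_apply_ne _ h.ne, sub_zero]
    · subst h
      rw [Matrix.sub_apply, hXdiag, Matrix.diagonal_apply_eq, sub_self]
  · rintro ⟨Y, hY, rfl⟩
    set l : Matrix (Fin n) (Fin n) ℂ := Matrix.of (rowL d Y) with hl
    have hlu : IsLowerUni l := ⟨fun i => rowL_diag d Y i, fun i j h => rowL_upper d Y h⟩
    have hdet : IsUnit l.det := by rw [lowerUni_det hlu]; exact isUnit_one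
    refine ⟨l, hlu, ?_⟩
    have hk := key_eq d hd Y hY
    rw [← hl] at hk
    calc Matrix.diagonal d + Y
        = (Matrix.diagonal d + Y) * (l * l⁻¹) := by
          rw [Matrix.mul_nonsing_inv l hdet, mul_one]
      _ = ((Matrix.diagonal d + Y) * l) * l⁻¹ := by rw [mul_assoc]
      _ = l * Matrix.diagonal d * l⁻¹ := by rw [hk]
end

section
/- The set of special unitary n×n matrices all of whose leading principal minors are nonzero is open and dense in the special unitary group SU(n) (with the subspace topology from the space of n×n complex matrices). -/
open Matrix

def Pm (p q : Fin n) : Matrix (Fin n) (Fin n) ℂ := Matrix.single p p 1 + Matrix.single q q 1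
def Jm (p q : Fin n) : Matrix (Fin n) (Fin n) ℂ := Matrix.single q p 1 - Matrix.single p q 1

noncomputable def rotMat (n : ℕ) (p q : Fin n) (θ : ℝ) : Matrix (Fin n) (Fin n) ℂ :=
  1 + ((Real.cos θ : ℂ) - 1) • Pm p q + (Real.sin θ : ℂ) • Jm p q

section rot
variable {p q : Fin n}

lemma mulA (hpq : p ≠ q) (i l : Fin n) :
    Matrix.single i p (1:ℂ) * Matrix.single q l 1 = 0 :=
  Matrix.single_mul_single_of_ne _ _ _ _ hpq _

lemma mulB (hpq : p ≠ q) (i l : Fin n) :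
    Matrix.single i q (1:ℂ) * Matrix.single p l 1 = 0 :=
  Matrix.single_mul_single_of_ne _ _ _ _ hpq.symm _

lemma hP2 (hpq : p ≠ q) : Pm p q * Pm p q = Pm p q := by
  simp [Pm, add_mul, mul_add, single_mul_single_same,
    mulA hpq, mulB hpq]

lemma hJ2 (hpq : p ≠ q) : Jm p q * Jm p q = -Pm p q := by
  simp only [Jm, Pm, sub_mul, mul_sub, single_mul_single_same,
    mulA hpq, mulB hpq, one_mul]
  abel

lemma hPJ (hpq : p ≠ q) : Pm p q * Jm p q = Jm p q := by
  simp only [Pm, Jm, add_mul, mul_sub, single_mul_single_same,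
    mulA hpq, mulB hpq, one_mul]
  abel

lemma hJP (hpq : p ≠ q) : Jm p q * Pm p q = Jm p q := by
  simp only [Jm, Pm, sub_mul, mul_add, single_mul_single_same,
    mulA hpq, mulB hpq, one_mul]
  abel

lemma stdH (a b : Fin n) : (Matrix.single a b (1:ℂ))ᴴ = Matrix.single b a 1 := by
  ext x y
  simp [conjTranspose_apply, Matrix.single, and_comm]

lemma hPH : (Pm p q)ᴴ = Pm p q := by
  simp [Pm, conjTranspose_add, stdH]

lemma hJH : (Jm p q)ᴴ = -(Jm p q) := by
  simp [Jm, conjTranspose_sub, stdH]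

lemma rot_conjT (θ : ℝ) : (rotMat n p q θ)ᴴ =
    1 + ((Real.cos θ : ℂ) - 1) • Pm p q + (-(Real.sin θ : ℂ)) • Jm p q := by
  rw [rotMat, conjTranspose_add, conjTranspose_add, conjTranspose_smul, conjTranspose_smul,
    conjTranspose_one, hPH, hJH, smul_neg, ← neg_smul]
  congr 2
  · congr 1
    rw [Complex.star_def, map_sub, Complex.conj_ofReal]
    norm_num
  · congr 1
    rw [Complex.star_def, Complex.conj_ofReal]

lemma rot_unitary (hpq : p ≠ q) (θ : ℝ) : (rotMat n p q θ)ᴴ * rotMat n p q θ = 1 := by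
  rw [rot_conjT, rotMat]
  simp only [mul_add, add_mul, smul_mul_assoc, mul_smul_comm, hP2 hpq, hJ2 hpq, hPJ hpq,
    hJP hpq, smul_smul, one_mul, mul_one]
  match_scalars
  any_goals ring
  all_goals linear_combination Complex.sin_sq_add_cos_sq (θ:ℂ)

end rot

section rot2
variable {p q : Fin n}

lemma mul_std_entry (M : Matrix (Fin n) (Fin n) ℂ) (a b x y : Fin n) :
    (M * Matrix.single a b (1:ℂ)) x y = if y = b then M x a else 0 := by
  split
  · subst ‹y = b›
    rw [mul_single_apply_same, mul_one]
  · exact Matrix.mul_single_apply_of_ne _ _ _ _ _ ‹y ≠ b› M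

lemma rot_entry (M : Matrix (Fin n) (Fin n) ℂ) (hpq : p ≠ q) (θ : ℝ) (x y : Fin n) :
    (M * rotMat n p q θ) x y =
      if y = p then (Real.cos θ : ℂ) * M x p + (Real.sin θ : ℂ) * M x q
      else if y = q then -(Real.sin θ : ℂ) * M x p + (Real.cos θ : ℂ) * M x q
      else M x y := by
  simp only [rotMat, mul_add, mul_one, Matrix.mul_smul, Pm, Jm, Matrix.mul_sub,
    Matrix.add_apply, Matrix.smul_apply, Matrix.sub_apply, smul_eq_mul,
    mul_std_entry]
  by_cases hyp : y = p
  · subst hyp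
    simp [hpq, Ne.symm hpq]
    ring
  · by_cases hyq : y = q
    · subst hyq
      simp [hpq, Ne.symm hpq, hyp]
      ring
    · simp [hyp, hyq]

lemma rot_mul_eq_update (M : Matrix (Fin n) (Fin n) ℂ) (hpq : p ≠ q) (θ : ℝ) :
    M * rotMat n p q θ =
      updateCol
        (updateCol M p ((Real.cos θ : ℂ) • (fun x => M x p) + (Real.sin θ : ℂ) • fun x => M x q))
        q ((-(Real.sin θ : ℂ)) • (fun x => M x p) + (Real.cos θ : ℂ) • fun x => M x q) := by
  ext x y
  rw [rot_entry M hpq]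
  simp only [updateCol_apply, Pi.add_apply, Pi.smul_apply, smul_eq_mul]
  by_cases hyp : y = p
  · subst hyp; simp [hpq]
  · by_cases hyq : y = q
    · subst hyq; simp [hyp]
    · simp [hyp, hyq]

lemma det_dup_col (M : Matrix (Fin n) (Fin n) ℂ) (hpq : p ≠ q)
    (h : ∀ x, M x p = M x q) : M.det = 0 := by
  rw [← det_transpose]
  exact det_zero_of_row_eq hpq (funext fun x => h x)

lemma swap_det (M : Matrix (Fin n) (Fin n) ℂ) (hpq : p ≠ q) :
    det (updateCol (updateCol M p (fun x => M x q)) q (fun x => M x p)) = -det M := by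
  have : updateCol (updateCol M p (fun x => M x q)) q (fun x => M x p)
      = M.submatrix id (Equiv.swap p q) := by
    ext x y
    simp only [updateCol_apply, submatrix_apply, id_eq]
    by_cases hyq : y = q
    · subst hyq; simp [Equiv.swap_apply_right]
    · by_cases hyp : y = p
      · subst hyp; simp [hyq, Equiv.swap_apply_left]
      · simp [hyp, hyq, Equiv.swap_apply_of_ne_of_ne hyp hyq]
  rw [this, det_permute', Equiv.Perm.sign_swap hpq]
  simp

lemma updateCol_comm (M : Matrix (Fin n) (Fin n) ℂ) (hpq : p ≠ q) (u v : Fin n → ℂ) :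
    updateCol (updateCol M p u) q v = updateCol (updateCol M q v) p u := by
  ext x y
  simp only [updateCol_apply]
  by_cases hyq : y = q <;> by_cases hyp : y = p <;> simp_all [hpq]

lemma det_mul_rot (M : Matrix (Fin n) (Fin n) ℂ) (hpq : p ≠ q) (θ : ℝ) :
    det (M * rotMat n p q θ) = det M := by
  set c : ℂ := (Real.cos θ : ℂ)
  set s : ℂ := (Real.sin θ : ℂ)
  have hcs : c * c + s * s = 1 := by
    have h : ((Real.cos θ ^2 + Real.sin θ ^2 : ℝ) : ℂ) = 1 := by
      rw [add_comm, Real.sin_sq_add_cos_sq]; norm_num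
    push_cast at h
    simp only [c, s, Complex.ofReal_cos, Complex.ofReal_sin]
    linear_combination h
  rw [rot_mul_eq_update M hpq]
  set cp : Fin n → ℂ := fun x => M x p
  set cq : Fin n → ℂ := fun x => M x q
  set N := updateCol M p (c • cp + s • cq) with hN
  have hNq : (fun x => N x q) = cq := by
    funext x
    simp [hN, updateCol_apply, Ne.symm hpq, cq]
  have hdup1 : det (updateCol M p cq) = 0 := by
    apply det_dup_col _ hpq
    intro x
    simp [updateCol_apply, Ne.symm hpq, hpq, cq]
  have hdetN : det N = c * det M := by
    rw [hN, det_updateCol_add, det_updateCol_smul, det_updateCol_smul,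
      updateCol_eq_self, hdup1, mul_zero, add_zero]
  have hswap : det (updateCol N q cp) = -(s * det M) := by
    rw [hN, _root_.updateCol_comm _ hpq, det_updateCol_add, det_updateCol_smul,
      det_updateCol_smul]
    have d1 : det (updateCol (updateCol M q cp) p cp) = 0 := by
      apply det_dup_col _ hpq
      intro x
      simp [updateCol_apply, Ne.symm hpq, hpq]
    have d2 : det (updateCol (updateCol M q cp) p cq) = -det M := by
      rw [_root_.updateCol_comm _ (Ne.symm hpq)]
      exact swap_det M hpq
    rw [d1, d2, mul_zero, zero_add, mul_neg]
  rw [det_updateCol_add, det_updateCol_smul, det_updateCol_smul, ← hNq,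
    updateCol_eq_self, hswap, hdetN]
  linear_combination (det M) * hcs

end rot2

section minors
variable {n : ℕ}

lemma adj_last (k : Matrix (Fin n) (Fin n) ℂ) {j : ℕ} (hj1 : j + 1 ≤ n) :
    adjugate (k.submatrix (Fin.castLE hj1) (Fin.castLE hj1)) (Fin.last j) (Fin.last j)
      = leadMinor k j (by omega) := by
  set A₀ := k.submatrix (Fin.castLE hj1) (Fin.castLE hj1) with hA
  rw [adjugate_apply, det_succ_row _ (Fin.last j)]
  rw [Finset.sum_eq_single (Fin.last j)]
  · rw [updateRow_self, Pi.single_eq_same]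
    have h2 : ((-1 : ℂ)) ^ ((Fin.last j : ℕ) + (Fin.last j : ℕ)) = 1 :=
      Even.neg_one_pow (Even.add_self _)
    rw [h2, one_mul, one_mul]
    have h3 : ((A₀.updateRow (Fin.last j) (Pi.single (Fin.last j) 1)).submatrix
        (Fin.last j).succAbove (Fin.last j).succAbove) =
        k.submatrix (Fin.castLE (by omega : j ≤ n)) (Fin.castLE (by omega : j ≤ n)) := by
      ext x y
      rw [Fin.succAbove_last, submatrix_apply, updateRow_ne (Fin.castSucc_lt_last x).ne]
      rw [hA, submatrix_apply, submatrix_apply]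
      congr 1 <;> exact Fin.ext rfl
    rw [h3]
    rfl
  · intro l _ hl
    rw [updateRow_self, Pi.single_eq_of_ne hl, mul_zero, zero_mul]
  · intro h; exact absurd (Finset.mem_univ _) h

lemma exists_good_col (k : Matrix (Fin n) (Fin n) ℂ) (hdet : IsUnit k.det) {j : ℕ}
    (hj1 : j + 1 ≤ n)
    (hmj : leadMinor k j (by omega) ≠ 0) (hmj1 : leadMinor k (j+1) hj1 = 0) :
    ∃ q : Fin n, j < q.val ∧
      det (updateCol (k.submatrix (Fin.castLE hj1) (Fin.castLE hj1)) (Fin.last j)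
        (fun i => k (Fin.castLE hj1 i) q)) ≠ 0 := by
  set A₀ := k.submatrix (Fin.castLE hj1) (Fin.castLE hj1) with hA
  set f : Fin n → Fin (j+1) → ℂ := fun q i => k (Fin.castLE hj1 i) q with hf
  have hexq : ∃ q : Fin n, det (updateCol A₀ (Fin.last j) (f q)) ≠ 0 := by
    by_contra hall
    push_neg at hall
    set r : Fin (j+1) → ℂ := fun l => adjugate A₀ (Fin.last j) l with hr
    have hDq : ∀ q : Fin n, ∑ l, r l * k (Fin.castLE hj1 l) q = 0 := by
      intro q
      have h1 : det (updateCol A₀ (Fin.last j) (f q)) = ∑ l, r l * f q l := by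
        rw [← cramer_apply, cramer_eq_adjugate_mulVec]
        rfl
      rw [← h1] at *
      exact hall q
    set w : Fin n → ℂ := fun p => if hp : p.val < j + 1 then r ⟨p.val, hp⟩ else 0 with hw
    have hwk : w ᵥ* k = 0 := by
      funext q
      have h2 : (w ᵥ* k) q = ∑ p : Fin n, w p * k p q := rfl
      rw [h2]
      have h3 : ∑ p : Fin n, w p * k p q
          = ∑ p ∈ Finset.univ.map (Fin.castLEEmb hj1), w p * k p q := by
        symm
        apply Finset.sum_subset (Finset.subset_univ _)
        intro p _ hp
        have hnl : ¬ p.val < j + 1 := by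
          intro hlt
          exact hp (by
            simp only [Finset.mem_map, Finset.mem_univ, true_and]
            exact ⟨⟨p.val, hlt⟩, Fin.ext rfl⟩)
        have hnl' : ¬ (p:ℕ) ≤ j := by omega
        simp [hw, hnl, hnl']
      rw [h3, Finset.sum_map]
      have h4 : ∀ l : Fin (j+1), w (Fin.castLEEmb hj1 l) * k (Fin.castLEEmb hj1 l) q
          = r l * k (Fin.castLE hj1 l) q := by
        intro l
        have : w (Fin.castLEEmb hj1 l) = r l := by
          simp only [hw, Fin.coe_castLEEmb]
          rw [dif_pos (by exact l.isLt)]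
          exact congrArg r (Fin.ext rfl)
        rw [this]
        rfl
      rw [Finset.sum_congr rfl (fun l _ => h4 l)]
      simpa using hDq q
    have hw0 : w = 0 := by
      have h5 := congrArg (fun v => v ᵥ* k⁻¹) hwk
      simpa [Matrix.vecMul_vecMul, Matrix.mul_nonsing_inv k hdet, Matrix.vecMul_one,
        Matrix.zero_vecMul] using h5
    have h6 : w (Fin.castLE hj1 (Fin.last j)) = r (Fin.last j) := by
      simp only [hw]
      rw [dif_pos (by exact (Fin.last j).isLt)]
      exact congrArg r (Fin.ext rfl)
    rw [hw0] at h6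
    have h7 : r (Fin.last j) = leadMinor k j (by omega) := adj_last k hj1
    rw [h7] at h6
    exact hmj h6.symm
  obtain ⟨q, hq⟩ := hexq
  refine ⟨q, ?_, hq⟩
  by_contra hle
  push_neg at hle
  have hlt : q.val < j + 1 := by omega
  rcases eq_or_ne q.val j with hqj | hqj
  · apply hq
    have : f q = fun i => A₀ i (Fin.last j) := by
      funext i
      rw [hf, hA, submatrix_apply]
      congr 1
      exact (Fin.ext hqj : q = Fin.castLE hj1 (Fin.last j))
    rw [this, updateCol_eq_self]
    exact hmj1
  · apply hq
    apply det_dup_col (p := (⟨q.val, hlt⟩ : Fin (j+1))) (q := Fin.last j) _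
      (by intro hcon; exact hqj (congrArg Fin.val hcon))
    intro x
    rw [updateCol_apply, if_neg (by intro hcon; exact hqj (congrArg Fin.val hcon)),
      updateCol_apply, if_pos rfl]
    rw [hA, submatrix_apply, hf]
    exact congrArg (fun z => k (Fin.castLE hj1 x) z) (Fin.ext rfl)

end minors

section rot3
variable {n : ℕ}

lemma rot_zero (p q : Fin n) : rotMat n p q 0 = 1 := by
  simp [rotMat]

lemma rot_continuous (p q : Fin n) (k : Matrix (Fin n) (Fin n) ℂ) :
    Continuous fun θ : ℝ => k * rotMat n p q θ := by
  apply Continuous.matrix_mul continuous_const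
  unfold rotMat
  have h1 : Continuous fun θ : ℝ => ((Real.cos θ : ℂ) - 1) :=
    (Complex.continuous_ofReal.comp Real.continuous_cos).sub continuous_const
  have h2 : Continuous fun θ : ℝ => (Real.sin θ : ℂ) :=
    Complex.continuous_ofReal.comp Real.continuous_sin
  exact (continuous_const.add (h1.smul continuous_const)).add (h2.smul continuous_const)

lemma leadMinor_rot_small (k : Matrix (Fin n) (Fin n) ℂ) {j : ℕ} (hj : j < n) {q : Fin n}
    (hq : j < q.val) (θ : ℝ) {m : ℕ} (hm : m ≤ j) (h : m ≤ n) :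
    leadMinor (k * rotMat n ⟨j, hj⟩ q θ) m h = leadMinor k m h := by
  have hpq : (⟨j, hj⟩ : Fin n) ≠ q := by
    intro hcon
    rw [← hcon] at hq
    exact lt_irrefl _ hq
  unfold leadMinor
  congr 1
  ext x y
  rw [submatrix_apply, rot_entry k hpq θ, if_neg, if_neg, submatrix_apply]
  · intro hcon
    have : (y : ℕ) = q.val := congrArg Fin.val hcon
    omega
  · intro hcon
    have : (y : ℕ) = j := congrArg Fin.val hcon
    omega

lemma leadMinor_rot_new (k : Matrix (Fin n) (Fin n) ℂ) {j : ℕ} (hj1 : j + 1 ≤ n) {q : Fin n}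
    (hq : j < q.val) (θ : ℝ) :
    leadMinor (k * rotMat n ⟨j, by omega⟩ q θ) (j+1) hj1 =
      (Real.cos θ : ℂ) * leadMinor k (j+1) hj1 +
      (Real.sin θ : ℂ) * det (updateCol (k.submatrix (Fin.castLE hj1) (Fin.castLE hj1))
        (Fin.last j) (fun i => k (Fin.castLE hj1 i) q)) := by
  set p : Fin n := ⟨j, by omega⟩ with hp
  have hpq : p ≠ q := by
    intro hcon
    rw [← hcon] at hq
    exact lt_irrefl _ hq
  set A₀ := k.submatrix (Fin.castLE hj1) (Fin.castLE hj1) with hA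
  set f : Fin (j+1) → ℂ := fun i => k (Fin.castLE hj1 i) q with hf
  have hsub : (k * rotMat n p q θ).submatrix (Fin.castLE hj1) (Fin.castLE hj1)
      = updateCol A₀ (Fin.last j)
          ((Real.cos θ : ℂ) • (fun i => A₀ i (Fin.last j)) + (Real.sin θ : ℂ) • f) := by
    ext x y
    rw [submatrix_apply, rot_entry k hpq θ, updateCol_apply]
    by_cases hy : y = Fin.last j
    · subst hy
      rw [if_pos (Fin.ext rfl : Fin.castLE hj1 (Fin.last j) = p), if_pos rfl]
      simp only [Pi.add_apply, Pi.smul_apply, smul_eq_mul, hA, hf, submatrix_apply]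
      congr 3
    · have hyj : (y : ℕ) < j := by
        have := y.isLt
        have : (y : ℕ) ≠ j := fun hcon => hy (Fin.ext hcon)
        omega
      rw [if_neg, if_neg, if_neg hy]
      · rfl
      · intro hcon
        have : (y : ℕ) = q.val := congrArg Fin.val hcon
        omega
      · intro hcon
        have : (y : ℕ) = j := congrArg Fin.val hcon
        omega
  show ((k * rotMat n p q θ).submatrix (Fin.castLE hj1) (Fin.castLE hj1)).det = _
  rw [hsub, det_updateCol_add, det_updateCol_smul, det_updateCol_smul,
    updateCol_eq_self]
  rfl

end rot3

section main
variable {n : ℕ}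

def Sset (n j : ℕ) : Set (Matrix (Fin n) (Fin n) ℂ) :=
  {k | (IsUnitaryMat k ∧ k.det = 1) ∧ ∀ m (h : m ≤ n), m ≤ j → leadMinor k m h ≠ 0}

lemma step (j : ℕ) (hj1 : j + 1 ≤ n) : Sset n j ⊆ closure (Sset n (j+1)) := by
  intro k hk
  obtain ⟨⟨hU, hdet⟩, hmin⟩ := hk
  by_cases h0 : leadMinor k (j+1) hj1 ≠ 0
  · apply subset_closure
    refine ⟨⟨hU, hdet⟩, ?_⟩
    intro m h hm
    rcases Nat.lt_or_ge m (j+1) with hlt | hge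
    · exact hmin m h (by omega)
    · have hmj : m = j + 1 := by omega
      subst hmj
      exact h0
  · push_neg at h0
    have hdet' : IsUnit k.det := by rw [hdet]; exact isUnit_one
    have hmj : leadMinor k j (by omega) ≠ 0 := hmin j (by omega) le_rfl
    obtain ⟨q, hq, hD⟩ := exists_good_col k hdet' hj1 hmj h0
    set p : Fin n := ⟨j, by omega⟩ with hp
    have hpq : p ≠ q := by
      intro hcon
      rw [← hcon] at hq
      exact lt_irrefl _ hq
    have htend : Filter.Tendsto (fun θ : ℝ => k * rotMat n p q θ)
        (nhdsWithin 0 (Set.Ioi 0)) (nhds k) := by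
      have h1 := (rot_continuous p q k).tendsto 0
      rw [rot_zero, mul_one] at h1
      exact h1.mono_left nhdsWithin_le_nhds
    apply mem_closure_of_tendsto htend
    have hIoo : Set.Ioo (0:ℝ) Real.pi ∈ nhdsWithin (0:ℝ) (Set.Ioi 0) :=
      Ioo_mem_nhdsGT_of_mem ⟨le_refl 0, Real.pi_pos⟩
    filter_upwards [hIoo] with θ hθ
    have hsin : Real.sin θ ≠ 0 := ne_of_gt (Real.sin_pos_of_pos_of_lt_pi hθ.1 hθ.2)
    refine ⟨⟨?_, ?_⟩, ?_⟩
    · show (k * rotMat n p q θ)ᴴ * (k * rotMat n p q θ) = 1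
      rw [conjTranspose_mul]
      calc (rotMat n p q θ)ᴴ * kᴴ * (k * rotMat n p q θ)
          = (rotMat n p q θ)ᴴ * (kᴴ * k) * rotMat n p q θ := by
            rw [mul_assoc, mul_assoc, mul_assoc]
        _ = 1 := by rw [hU, mul_one, rot_unitary hpq]
    · rw [det_mul_rot k hpq, hdet]
    · intro m h hm
      rcases Nat.lt_or_ge m (j+1) with hlt | hge
      · rw [leadMinor_rot_small k (by omega) hq θ (by omega) h]
        exact hmin m h (by omega)
      · have hmeq : m = j + 1 := by omega
        subst hmeq
        rw [leadMinor_rot_new k hj1 hq θ, h0, mul_zero, zero_add]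
        exact mul_ne_zero (Complex.ofReal_ne_zero.mpr hsin) hD

lemma dense_aux (j : ℕ) :
    {k : Matrix (Fin n) (Fin n) ℂ | IsUnitaryMat k ∧ k.det = 1} ⊆ closure (Sset n j) := by
  induction j with
  | zero =>
    refine Set.Subset.trans ?_ subset_closure
    intro k hk
    refine ⟨hk, ?_⟩
    intro m h hm
    have hm0 : m = 0 := by omega
    subst hm0
    unfold leadMinor
    rw [det_isEmpty]
    exact one_ne_zero
  | succ j ih =>
    rcases Nat.lt_or_ge j n with hlt | hge
    · refine ih.trans ?_
      calc closure (Sset n j) ⊆ closure (closure (Sset n (j+1))) :=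
            closure_mono (step j (by omega))
        _ = closure (Sset n (j+1)) := closure_closure
    · have heq : Sset n (j+1) = Sset n j := by
        ext k
        constructor
        · rintro ⟨hSU, hmin⟩
          exact ⟨hSU, fun m h hm => hmin m h (by omega)⟩
        · rintro ⟨hSU, hmin⟩
          exact ⟨hSU, fun m h hm => hmin m h (by omega)⟩
      rw [heq]
      exact ih


end main

/-- The set of special unitary matrices with all leading principal minors nonzero is
open and dense in `SU(n)` (subspace topology from the space of matrices). -/
theorem stmt6 (n : ℕ) (hn : 0 < n) :
    (∃ W : Set (Matrix (Fin n) (Fin n) ℂ), IsOpen W ∧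
        {k : Matrix (Fin n) (Fin n) ℂ | (IsUnitaryMat k ∧ k.det = 1) ∧
            ∀ (m : ℕ) (h : m ≤ n), leadMinor k m h ≠ 0} =
          {k : Matrix (Fin n) (Fin n) ℂ | IsUnitaryMat k ∧ k.det = 1} ∩ W) ∧
    {k : Matrix (Fin n) (Fin n) ℂ | IsUnitaryMat k ∧ k.det = 1} ⊆
      closure {k : Matrix (Fin n) (Fin n) ℂ | (IsUnitaryMat k ∧ k.det = 1) ∧
        ∀ (m : ℕ) (h : m ≤ n), leadMinor k m h ≠ 0} := by
  have hSn : Sset n n = {k : Matrix (Fin n) (Fin n) ℂ | (IsUnitaryMat k ∧ k.det = 1) ∧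
      ∀ (m : ℕ) (h : m ≤ n), leadMinor k m h ≠ 0} := by
    ext k
    constructor
    · rintro ⟨a, b⟩
      exact ⟨a, fun m h => b m h h⟩
    · rintro ⟨a, b⟩
      exact ⟨a, fun m h _ => b m h⟩
  constructor
  · refine ⟨⋂ m : Fin (n+1),
      {A : Matrix (Fin n) (Fin n) ℂ | leadMinor A m.val (Nat.lt_succ_iff.mp m.isLt) ≠ 0},
      ?_, ?_⟩
    · apply isOpen_iInter_of_finite
      intro m
      have hc : Continuous fun A : Matrix (Fin n) (Fin n) ℂ =>
          leadMinor A m.val (Nat.lt_succ_iff.mp m.isLt) :=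
        (continuous_id.matrix_submatrix _ _).matrix_det
      have hcl : IsClosed {A : Matrix (Fin n) (Fin n) ℂ |
          leadMinor A m.val (Nat.lt_succ_iff.mp m.isLt) = 0} :=
        isClosed_eq hc continuous_const
      exact hcl.isOpen_compl
    · ext k
      simp only [Set.mem_setOf_eq, Set.mem_inter_iff, Set.mem_iInter]
      constructor
      · rintro ⟨hSU, hmin⟩
        exact ⟨hSU, fun m => hmin m.val (Nat.lt_succ_iff.mp m.isLt)⟩
      · rintro ⟨hSU, hmin⟩
        refine ⟨hSU, fun m h => ?_⟩
        exact hmin ⟨m, by omega⟩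
  · intro k hk
    have h1 := dense_aux (n := n) n hk
    rw [hSn] at h1
    exact h1
end

section
/- Let Λ be a diagonal n×n complex matrix with pairwise distinct diagonal entries. The map (k, l) ↦ (l·k)⁻¹·Λ·(l·k) is injective on C × L: if k₁, k₂ ∈ C and l₁, l₂ ∈ L satisfy (l₁k₁)⁻¹·Λ·(l₁k₁) = (l₂k₂)⁻¹·Λ·(l₂k₂), then k₁ = k₂ and l₁ = l₂. -/
open Matrix

/-- `C`: unitary matrices admitting an `LU` factorization with `l ∈ L`, `u ∈ U`. -/
def InBigCell {n : ℕ} (k : Matrix (Fin n) (Fin n) ℂ) : Prop :=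
  IsUnitaryMat k ∧ ∃ l u : Matrix (Fin n) (Fin n) ℂ, IsLowerUni l ∧ IsUpperPos u ∧ k = l * u

namespace Stmt7Aux

variable {n : ℕ}

abbrev LowT (A : Matrix (Fin n) (Fin n) ℂ) : Prop := ∀ i j : Fin n, i < j → A i j = 0
abbrev UpT (A : Matrix (Fin n) (Fin n) ℂ) : Prop := ∀ i j : Fin n, j < i → A i j = 0

lemma lowT_mul {A B : Matrix (Fin n) (Fin n) ℂ} (hA : LowT A) (hB : LowT B) :
    LowT (A * B) := by
  intro i j hij
  rw [Matrix.mul_apply]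
  apply Finset.sum_eq_zero
  intro k _
  rcases le_or_gt k i with hk | hk
  · rw [hB k j (lt_of_le_of_lt hk hij), mul_zero]
  · rw [hA i k hk, zero_mul]

lemma upT_mul {A B : Matrix (Fin n) (Fin n) ℂ} (hA : UpT A) (hB : UpT B) :
    UpT (A * B) := by
  intro i j hij
  rw [Matrix.mul_apply]
  apply Finset.sum_eq_zero
  intro k _
  rcases le_or_gt i k with hk | hk
  · rw [hB k j (lt_of_lt_of_le hij hk), mul_zero]
  · rw [hA i k hk, zero_mul]

lemma lowT_mul_diag {A B : Matrix (Fin n) (Fin n) ℂ} (hA : LowT A) (hB : LowT B) (i : Fin n) :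
    (A * B) i i = A i i * B i i := by
  rw [Matrix.mul_apply]
  apply Finset.sum_eq_single
  · intro k _ hk
    rcases lt_or_gt_of_ne hk with h' | h'
    · rw [hB k i h', mul_zero]
    · rw [hA i k h', zero_mul]
  · intro hi; exact absurd (Finset.mem_univ i) hi

lemma upT_mul_diag {A B : Matrix (Fin n) (Fin n) ℂ} (hA : UpT A) (hB : UpT B) (i : Fin n) :
    (A * B) i i = A i i * B i i := by
  rw [Matrix.mul_apply]
  apply Finset.sum_eq_single
  · intro k _ hk
    rcases lt_or_gt_of_ne hk with h' | h'
    · rw [hA i k h', zero_mul]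
    · rw [hB k i h', mul_zero]
  · intro hi; exact absurd (Finset.mem_univ i) hi

lemma lowT_blockTriangular {A : Matrix (Fin n) (Fin n) ℂ} (hA : LowT A) :
    A.BlockTriangular OrderDual.toDual := fun i j hij => hA i j hij

lemma upT_blockTriangular {A : Matrix (Fin n) (Fin n) ℂ} (hA : UpT A) :
    A.BlockTriangular id := fun i j hij => hA i j hij

lemma lowT_det {A : Matrix (Fin n) (Fin n) ℂ} (hA : LowT A) :
    A.det = ∏ i, A i i :=
  Matrix.det_of_lowerTriangular A (lowT_blockTriangular hA)

lemma upT_det {A : Matrix (Fin n) (Fin n) ℂ} (hA : UpT A) :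
    A.det = ∏ i, A i i :=
  Matrix.det_of_upperTriangular (upT_blockTriangular hA)

lemma lowT_inv {A : Matrix (Fin n) (Fin n) ℂ} (hA : LowT A) (h : IsUnit A.det) :
    LowT A⁻¹ := by
  haveI := A.invertibleOfIsUnitDet h
  exact fun i j hij => Matrix.blockTriangular_inv_of_blockTriangular (lowT_blockTriangular hA) hij

lemma upT_inv {A : Matrix (Fin n) (Fin n) ℂ} (hA : UpT A) (h : IsUnit A.det) :
    UpT A⁻¹ := by
  haveI := A.invertibleOfIsUnitDet h
  exact fun i j hij => Matrix.blockTriangular_inv_of_blockTriangular (upT_blockTriangular hA) hij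

lemma diag_lowT (v : Fin n → ℂ) : LowT (Matrix.diagonal v) :=
  fun _ _ hij => Matrix.diagonal_apply_ne v (ne_of_lt hij)

lemma diag_upT (v : Fin n → ℂ) : UpT (Matrix.diagonal v) :=
  fun _ _ hij => Matrix.diagonal_apply_ne v (ne_of_gt hij)

end Stmt7Aux

open Stmt7Aux in
/-- The map `(k, l) ↦ (l·k)⁻¹·Λ·(l·k)` is injective on `C × L`. -/
theorem stmt7 (n : ℕ) (hn : 0 < n) (d : Fin n → ℂ) (hd : Function.Injective d)
    (k₁ k₂ l₁ l₂ : Matrix (Fin n) (Fin n) ℂ)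
    (hk₁ : InBigCell k₁) (hk₂ : InBigCell k₂)
    (hl₁ : IsLowerUni l₁) (hl₂ : IsLowerUni l₂)
    (h : (l₁ * k₁)⁻¹ * Matrix.diagonal d * (l₁ * k₁) =
         (l₂ * k₂)⁻¹ * Matrix.diagonal d * (l₂ * k₂)) :
    k₁ = k₂ ∧ l₁ = l₂ := by
  obtain ⟨hk₁u, m₁, u₁, hm₁, hu₁, hk₁f⟩ := hk₁
  obtain ⟨hk₂u, m₂, u₂, hm₂, hu₂, hk₂f⟩ := hk₂
  have hdetl : ∀ (l : Matrix (Fin n) (Fin n) ℂ), IsLowerUni l → l.det = 1 := by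
    intro l hl
    rw [Stmt7Aux.lowT_det hl.2]
    simp [hl.1]
  have hdetk : ∀ (k : Matrix (Fin n) (Fin n) ℂ), kᴴ * k = 1 → IsUnit k.det := by
    intro k hk
    apply IsUnit.of_mul_eq_one (kᴴ.det)
    rw [mul_comm, ← Matrix.det_mul, hk, Matrix.det_one]
  set A := l₁ * k₁ with hA_def
  set B := l₂ * k₂ with hB_def
  have hdA : IsUnit A.det := by
    rw [hA_def, Matrix.det_mul, hdetl l₁ hl₁, one_mul]; exact hdetk k₁ hk₁u
  have hdB : IsUnit B.det := by
    rw [hB_def, Matrix.det_mul, hdetl l₂ hl₂, one_mul]; exact hdetk k₂ hk₂u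
  have hAA : A * A⁻¹ = 1 := Matrix.mul_nonsing_inv _ hdA
  have hAA' : A⁻¹ * A = 1 := Matrix.nonsing_inv_mul _ hdA
  have hBB : B * B⁻¹ = 1 := Matrix.mul_nonsing_inv _ hdB
  -- the quotient commutes with the diagonal matrix
  have hcom : (B * A⁻¹) * Matrix.diagonal d = Matrix.diagonal d * (B * A⁻¹) := by
    have h2 := congrArg (fun M => B * M * A⁻¹) h
    simp only [Matrix.mul_assoc] at h2 ⊢
    rw [hAA, Matrix.mul_one] at h2
    rw [← Matrix.mul_assoc B B⁻¹, hBB, Matrix.one_mul] at h2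
    exact h2
  set E : Fin n → ℂ := fun i => (B * A⁻¹) i i with hE
  -- the quotient is diagonal
  have hgd : B * A⁻¹ = Matrix.diagonal E := by
    ext i j
    by_cases hij : i = j
    · subst hij; rw [Matrix.diagonal_apply_eq]
    · rw [Matrix.diagonal_apply_ne _ hij]
      have h3 := congrFun (congrFun hcom i) j
      rw [Matrix.mul_diagonal, Matrix.diagonal_mul] at h3
      have h4 : (B * A⁻¹) i j * (d j - d i) = 0 := by ring_nf; linear_combination h3
      rcases mul_eq_zero.mp h4 with h5 | h5
      · exact h5
      · exact absurd (hd (by linear_combination h5)) (Ne.symm hij)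
  have hB2 : B = Matrix.diagonal E * A := by
    calc B = B * (A⁻¹ * A) := by rw [hAA', Matrix.mul_one]
    _ = (B * A⁻¹) * A := (Matrix.mul_assoc _ _ _).symm
    _ = Matrix.diagonal E * A := by rw [hgd]
  have hk₁u' : k₁ * k₁ᴴ = 1 := mul_eq_one_comm.mp hk₁u
  have hq : l₂ * (k₂ * k₁ᴴ) = Matrix.diagonal E * l₁ := by
    have h5 : B * k₁ᴴ = Matrix.diagonal E * A * k₁ᴴ := by rw [hB2]
    rw [hA_def, hB_def] at h5
    simp only [Matrix.mul_assoc] at h5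
    rw [hk₁u', Matrix.mul_one] at h5
    exact h5
  have hdl₂ : IsUnit l₂.det := by rw [hdetl l₂ hl₂]; exact isUnit_one
  have hl₂inv : l₂⁻¹ * l₂ = 1 := Matrix.nonsing_inv_mul _ hdl₂
  have hqeq : k₂ * k₁ᴴ = l₂⁻¹ * (Matrix.diagonal E * l₁) := by
    rw [← hq, ← Matrix.mul_assoc, hl₂inv, Matrix.one_mul]
  have hl₂invlow : LowT l₂⁻¹ := lowT_inv hl₂.2 hdl₂
  have hqlow : LowT (k₂ * k₁ᴴ) := by
    rw [hqeq]; exact lowT_mul hl₂invlow (lowT_mul (diag_lowT E) hl₁.2)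
  have hl₂invdiag : ∀ i, l₂⁻¹ i i = 1 := by
    intro i
    have h6 := congrFun (congrFun hl₂inv i) i
    rw [lowT_mul_diag hl₂invlow hl₂.2 i, hl₂.1 i, mul_one] at h6
    rw [h6, Matrix.one_apply_eq]
  have hqdiagE : ∀ i, (k₂ * k₁ᴴ) i i = E i := by
    intro i
    rw [hqeq, lowT_mul_diag hl₂invlow (lowT_mul (diag_lowT E) hl₁.2) i,
      lowT_mul_diag (diag_lowT E) hl₁.2 i, hl₂invdiag i, hl₁.1 i,
      Matrix.diagonal_apply_eq, one_mul, mul_one]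
  -- q := k₂ * k₁ᴴ is unitary
  have hqu : (k₂ * k₁ᴴ)ᴴ * (k₂ * k₁ᴴ) = 1 := by
    rw [Matrix.conjTranspose_mul, Matrix.conjTranspose_conjTranspose]
    simp only [Matrix.mul_assoc]
    rw [← Matrix.mul_assoc k₂ᴴ k₂ k₁ᴴ, hk₂u, Matrix.one_mul, hk₁u']
  have hqinv : (k₂ * k₁ᴴ)⁻¹ = (k₂ * k₁ᴴ)ᴴ := Matrix.inv_eq_left_inv hqu
  have hdetq : IsUnit (k₂ * k₁ᴴ).det := hdetk _ hqu
  have hqup : UpT (k₂ * k₁ᴴ) := by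
    intro i j hji
    have h0 : (k₂ * k₁ᴴ)ᴴ j i = 0 := by
      rw [← hqinv]; exact lowT_inv hqlow hdetq j i hji
    rw [Matrix.conjTranspose_apply] at h0
    exact star_eq_zero.mp h0
  have hqdiag : k₂ * k₁ᴴ = Matrix.diagonal E := by
    ext i j
    rcases lt_trichotomy i j with hij | hij | hij
    · rw [hqlow i j hij, Matrix.diagonal_apply_ne _ (ne_of_lt hij)]
    · subst hij; rw [hqdiagE, Matrix.diagonal_apply_eq]
    · rw [hqup i j hij, Matrix.diagonal_apply_ne _ (ne_of_gt hij)]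
  -- each E i is unimodular
  have hE1 : ∀ i, star (E i) * E i = 1 := by
    intro i
    have h0 : (Matrix.diagonal E)ᴴ * Matrix.diagonal E = 1 := by rw [← hqdiag]; exact hqu
    rw [Matrix.diagonal_conjTranspose, Matrix.diagonal_mul_diagonal] at h0
    have h1 := congrFun (congrFun h0 i) i
    rw [Matrix.diagonal_apply_eq, Matrix.one_apply_eq] at h1
    simpa using h1
  rw [hqdiag] at hq
  -- k₂ = diagonal E * k₁
  have hk21 : k₂ = Matrix.diagonal E * k₁ := by
    calc k₂ = k₂ * (k₁ᴴ * k₁) := by rw [hk₁u, Matrix.mul_one]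
    _ = (k₂ * k₁ᴴ) * k₁ := by rw [Matrix.mul_assoc]
    _ = Matrix.diagonal E * k₁ := by rw [hqdiag]
  -- LU comparison: each E i is a positive real
  have hdu₁ : IsUnit u₁.det := by
    rw [upT_det hu₁.2]
    apply isUnit_iff_ne_zero.mpr
    apply Finset.prod_ne_zero_iff.mpr
    intro i _
    intro h0
    have := (hu₁.1 i).1
    rw [h0] at this
    simp at this
  have hdm₂ : IsUnit m₂.det := by rw [hdetl m₂ hm₂]; exact isUnit_one
  have hm₂inv : m₂⁻¹ * m₂ = 1 := Matrix.nonsing_inv_mul _ hdm₂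
  have hu₁inv : u₁ * u₁⁻¹ = 1 := Matrix.mul_nonsing_inv _ hdu₁
  have hLU : m₂ * u₂ = Matrix.diagonal E * (m₁ * u₁) := by rw [← hk₂f, hk21, hk₁f]
  have hN : m₂⁻¹ * (Matrix.diagonal E * m₁) = u₂ * u₁⁻¹ := by
    have h1 := congrArg (fun M => m₂⁻¹ * M * u₁⁻¹) hLU
    simp only [Matrix.mul_assoc] at h1
    rw [hu₁inv, Matrix.mul_one] at h1
    rw [← Matrix.mul_assoc m₂⁻¹ m₂, hm₂inv, Matrix.one_mul] at h1
    rw [← h1]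
  have hm₂invlow : LowT m₂⁻¹ := lowT_inv hm₂.2 hdm₂
  have hu₁invup : UpT u₁⁻¹ := upT_inv hu₁.2 hdu₁
  have hm₂invdiag : ∀ i, m₂⁻¹ i i = 1 := by
    intro i
    have h6 := congrFun (congrFun hm₂inv i) i
    rw [lowT_mul_diag hm₂invlow hm₂.2 i, hm₂.1 i, mul_one] at h6
    rw [h6, Matrix.one_apply_eq]
  have hu₁invdiag : ∀ i, u₁ i i * u₁⁻¹ i i = 1 := by
    intro i
    have h6 := congrFun (congrFun hu₁inv i) i
    rw [upT_mul_diag hu₁.2 hu₁invup i] at h6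
    rw [h6, Matrix.one_apply_eq]
  have hEval : ∀ i, E i * u₁ i i = u₂ i i := by
    intro i
    have hL : (m₂⁻¹ * (Matrix.diagonal E * m₁)) i i = E i := by
      rw [lowT_mul_diag hm₂invlow (lowT_mul (diag_lowT E) hm₁.2) i,
        lowT_mul_diag (diag_lowT E) hm₁.2 i, hm₂invdiag i, hm₁.1 i,
        Matrix.diagonal_apply_eq, one_mul, mul_one]
    have hR : (u₂ * u₁⁻¹) i i = u₂ i i * u₁⁻¹ i i := upT_mul_diag hu₂.2 hu₁invup i
    have h7 : E i = u₂ i i * u₁⁻¹ i i := by rw [← hL, hN, hR]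
    calc E i * u₁ i i = u₂ i i * (u₁ i i * u₁⁻¹ i i) := by rw [h7]; ring
    _ = u₂ i i := by rw [hu₁invdiag i, mul_one]
  have hEone : ∀ i, E i = 1 := by
    intro i
    obtain ⟨hare, haim⟩ := hu₁.1 i
    obtain ⟨hbre, hbim⟩ := hu₂.1 i
    have hmr := congrArg Complex.re (hEval i)
    have hmi := congrArg Complex.im (hEval i)
    rw [Complex.mul_re, haim] at hmr
    rw [Complex.mul_im, haim, hbim] at hmi
    simp only [mul_zero, sub_zero, zero_mul, add_zero, zero_add] at hmr hmi
    -- hmi : (E i).im * (u₁ i i).re = 0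
    have him : (E i).im = 0 := by
      rcases mul_eq_zero.mp hmi with h' | h'
      · exact h'
      · exfalso; rw [h'] at hare; exact lt_irrefl 0 hare
    have hre : 0 < (E i).re := by
      have h8 : 0 < (E i).re * (u₁ i i).re := by rw [hmr]; exact hbre
      nlinarith
    have hsq := congrArg Complex.re (hE1 i)
    rw [Complex.mul_re] at hsq
    simp only [Complex.star_def, Complex.conj_re, Complex.conj_im, Complex.one_re] at hsq
    -- hsq : (E i).re * (E i).re - (-(E i).im) * (E i).im = 1
    have hre1 : (E i).re = 1 := by nlinarith [him]
    apply Complex.ext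
    · rw [hre1]; rfl
    · rw [him]; rfl
  have hEdiag : Matrix.diagonal E = 1 := by
    have : E = fun _ => (1 : ℂ) := funext hEone
    rw [this]; exact Matrix.diagonal_one
  constructor
  · rw [hk21, hEdiag, Matrix.one_mul]
  · have := hq
    rw [hEdiag, Matrix.one_mul, Matrix.mul_one] at this
    exact this.symm
end

section
/- Let Λ be a diagonal n×n complex matrix with pairwise distinct diagonal entries. Then the two chart parametrizations have the same image: {(l·k)⁻¹·Λ·(l·k) : k ∈ C, l ∈ L} = {u·(l⁻¹·Λ·l)·u⁻¹ : u ∈ D, l ∈ L}; moreover the map (u, l) ↦ u·(l⁻¹·Λ·l)·u⁻¹ is injective on D × L. -/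
open Matrix

/-- `D`: matrices `u ∈ U` such that `l = k·u` for some `l ∈ L` and unitary `k`. -/
def InCellD {n : ℕ} (u : Matrix (Fin n) (Fin n) ℂ) : Prop :=
  IsUpperPos u ∧ ∃ l k : Matrix (Fin n) (Fin n) ℂ, IsLowerUni l ∧ IsUnitaryMat k ∧ l = k * u

section Aux
open Finset
variable {n : ℕ}




-- lower triangular as BlockTriangular
lemma IsLowerUni.bt {l : Matrix (Fin n) (Fin n) ℂ} (h : IsLowerUni l) :
    BlockTriangular l OrderDual.toDual := fun i j hij => h.2 i j hij

lemma IsUpperPos.bt {u : Matrix (Fin n) (Fin n) ℂ} (h : IsUpperPos u) :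
    BlockTriangular u id := fun i j hij => h.2 i j hij

lemma IsLowerUni.det {l : Matrix (Fin n) (Fin n) ℂ} (h : IsLowerUni l) : l.det = 1 := by
  rw [Matrix.det_of_lowerTriangular l h.bt]
  simp [h.1]

lemma IsUpperPos.diag_ne {u : Matrix (Fin n) (Fin n) ℂ} (h : IsUpperPos u) (i : Fin n) :
    u i i ≠ 0 := by
  intro hc
  have := (h.1 i).1
  rw [hc] at this; simp at this

lemma IsUpperPos.det_isUnit {u : Matrix (Fin n) (Fin n) ℂ} (h : IsUpperPos u) :
    IsUnit u.det := by
  rw [Matrix.det_of_upperTriangular h.bt]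
  exact isUnit_iff_ne_zero.2 (Finset.prod_ne_zero_iff.2 fun i _ => h.diag_ne i)

lemma IsLowerUni.det_isUnit {l : Matrix (Fin n) (Fin n) ℂ} (h : IsLowerUni l) :
    IsUnit l.det := by rw [h.det]; exact isUnit_one

-- diagonal entry of product of two lower triangular matrices
lemma diag_mul_lower {A B : Matrix (Fin n) (Fin n) ℂ}
    (hA : ∀ i j : Fin n, i < j → A i j = 0) (hB : ∀ i j : Fin n, i < j → B i j = 0)
    (i : Fin n) : (A * B) i i = A i i * B i i := by
  rw [Matrix.mul_apply]
  apply Finset.sum_eq_single i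
  · intro k _ hk
    rcases lt_or_gt_of_ne hk with h | h
    · rw [hB k i h, mul_zero]
    · rw [hA i k h, zero_mul]
  · simp

lemma diag_mul_upper {A B : Matrix (Fin n) (Fin n) ℂ}
    (hA : ∀ i j : Fin n, j < i → A i j = 0) (hB : ∀ i j : Fin n, j < i → B i j = 0)
    (i : Fin n) : (A * B) i i = A i i * B i i := by
  rw [Matrix.mul_apply]
  apply Finset.sum_eq_single i
  · intro k _ hk
    rcases lt_or_gt_of_ne hk with h | h
    · rw [hA i k h, zero_mul]
    · rw [hB k i h, mul_zero]
  · simp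

lemma IsLowerUni.mul {A B : Matrix (Fin n) (Fin n) ℂ} (hA : IsLowerUni A) (hB : IsLowerUni B) :
    IsLowerUni (A * B) := by
  constructor
  · intro i; rw [diag_mul_lower hA.2 hB.2, hA.1, hB.1, one_mul]
  · exact fun i j hij => hA.bt.mul hB.bt hij

lemma IsLowerUni.inv {A : Matrix (Fin n) (Fin n) ℂ} (hA : IsLowerUni A) : IsLowerUni A⁻¹ := by
  have hinv : Invertible A := A.invertibleOfIsUnitDet hA.det_isUnit
  have hbt : BlockTriangular A⁻¹ OrderDual.toDual := blockTriangular_inv_of_blockTriangular hA.bt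
  constructor
  · intro i
    have h1 : (A⁻¹ * A) i i = A⁻¹ i i * A i i := diag_mul_lower (fun i j h => hbt h) hA.2 i
    rw [Matrix.nonsing_inv_mul A hA.det_isUnit] at h1
    rw [hA.1 i, mul_one] at h1
    simpa using h1.symm
  · exact fun i j hij => hbt hij

lemma IsUpperPos.mul {A B : Matrix (Fin n) (Fin n) ℂ} (hA : IsUpperPos A) (hB : IsUpperPos B) :
    IsUpperPos (A * B) := by
  constructor
  · intro i
    rw [diag_mul_upper hA.2 hB.2]
    obtain ⟨ha, ha'⟩ := hA.1 i
    obtain ⟨hb, hb'⟩ := hB.1 i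
    constructor
    · simp [Complex.mul_re, ha', hb', mul_pos ha hb]
    · simp [Complex.mul_im, ha', hb']
  · exact fun i j hij => hA.bt.mul hB.bt hij

lemma IsUpperPos.inv {A : Matrix (Fin n) (Fin n) ℂ} (hA : IsUpperPos A) : IsUpperPos A⁻¹ := by
  have hinv : Invertible A := A.invertibleOfIsUnitDet hA.det_isUnit
  have hbt : BlockTriangular A⁻¹ id := blockTriangular_inv_of_blockTriangular hA.bt
  constructor
  · intro i
    have h1 : (A⁻¹ * A) i i = A⁻¹ i i * A i i := diag_mul_upper (fun i j h => hbt h) hA.2 i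
    rw [Matrix.nonsing_inv_mul A hA.det_isUnit] at h1
    have hone : (1 : Matrix (Fin n) (Fin n) ℂ) i i = 1 := by simp
    rw [hone] at h1
    have hval : A⁻¹ i i = (A i i)⁻¹ := eq_inv_of_mul_eq_one_left h1.symm
    obtain ⟨ha, ha'⟩ := hA.1 i
    rw [hval, Complex.inv_re, Complex.inv_im, ha']
    refine ⟨div_pos ha (Complex.normSq_pos.mpr (hA.diag_ne i)), ?_⟩
    simp [ha']
  · exact fun i j hij => hbt hij

-- commuting with diagonal with distinct entries implies off-diagonal zero
lemma comm_diagonal_offdiag {d : Fin n → ℂ} (hd : Function.Injective d)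
    {g : Matrix (Fin n) (Fin n) ℂ} (h : g * Matrix.diagonal d = Matrix.diagonal d * g)
    {i j : Fin n} (hij : i ≠ j) : g i j = 0 := by
  have := congrFun (congrFun h i) j
  rw [Matrix.mul_diagonal, Matrix.diagonal_mul] at this
  have hdd : d j ≠ d i := fun hc => hij (hd hc).symm
  have : g i j * (d j - d i) = 0 := by ring_nf; linear_combination this
  rcases mul_eq_zero.1 this with h' | h'
  · exact h'
  · exact absurd (sub_eq_zero.1 h') hdd

-- trailing embedding
def temb (n m : ℕ) (h : m ≤ n) : Fin m → Fin n := fun i => ⟨n - m + i, by omega⟩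

lemma temb_strictMono {m : ℕ} (h : m ≤ n) : StrictMono (temb n m h) := by
  intro a b hab
  simp only [temb, Fin.lt_def, Fin.mk_lt_mk]
  exact Nat.add_lt_add_left hab _

lemma temb_inj {m : ℕ} (h : m ≤ n) : Function.Injective (temb n m h) :=
  (temb_strictMono h).injective

lemma mem_temb_range {m : ℕ} (h : m ≤ n) (k : Fin n) :
    (∃ a : Fin m, temb n m h a = k) ↔ n - m ≤ k.val := by
  constructor
  · rintro ⟨a, rfl⟩; simp [temb]
  · intro hk
    refine ⟨⟨k.val - (n - m), by omega⟩, ?_⟩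
    simp only [temb]
    ext; simp; omega

-- trailing submatrix of lower unitriangular is lower unitriangular
lemma IsLowerUni.trail {l : Matrix (Fin n) (Fin n) ℂ} (hl : IsLowerUni l) {m : ℕ} (h : m ≤ n) :
    IsLowerUni (l.submatrix (temb n m h) (temb n m h)) :=
  ⟨fun i => hl.1 _, fun i j hij => hl.2 _ _ (temb_strictMono h hij)⟩

-- key: trailing submatrix of lᴴ * l is (trail l)ᴴ * (trail l)
lemma trail_conjTranspose_mul {l : Matrix (Fin n) (Fin n) ℂ} (hl : IsLowerUni l)
    {m : ℕ} (h : m ≤ n) :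
    (lᴴ * l).submatrix (temb n m h) (temb n m h) =
      (l.submatrix (temb n m h) (temb n m h))ᴴ * l.submatrix (temb n m h) (temb n m h) := by
  ext i j
  simp only [Matrix.submatrix_apply, Matrix.mul_apply, Matrix.conjTranspose_apply]
  have hmap : ∑ x ∈ Finset.univ.map ⟨temb n m h, temb_inj h⟩,
      star (l x (temb n m h i)) * l x (temb n m h j) =
      ∑ x : Fin m, star (l (temb n m h x) (temb n m h i)) * l (temb n m h x) (temb n m h j) := by
    rw [Finset.sum_map]; rfl
  rw [← hmap]
  symm
  apply Finset.sum_subset (Finset.subset_univ _)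
  intro k _ hk
  have hk' : k.val < n - m := by
    by_contra hc
    push_neg at hc
    exact hk (Finset.mem_map.2 (by
      obtain ⟨a, ha⟩ := (mem_temb_range h k).2 hc
      exact ⟨a, Finset.mem_univ a, ha⟩))
  have : l k (temb n m h i) = 0 := by
    apply hl.2
    simp only [temb, Fin.lt_def]
    omega
  rw [this, star_zero, zero_mul]

lemma det_trail_gram {l : Matrix (Fin n) (Fin n) ℂ} (hl : IsLowerUni l) {m : ℕ} (h : m ≤ n) :
    ((lᴴ * l).submatrix (temb n m h) (temb n m h)).det = 1 := by
  rw [trail_conjTranspose_mul hl h, Matrix.det_mul, Matrix.det_conjTranspose,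
    (hl.trail h).det]
  simp

lemma trail_diag_sandwich (a b : Fin n → ℂ) (Q : Matrix (Fin n) (Fin n) ℂ) {m : ℕ} (h : m ≤ n) :
    (Matrix.diagonal a * Q * Matrix.diagonal b).submatrix (temb n m h) (temb n m h) =
      Matrix.diagonal (a ∘ temb n m h) * Q.submatrix (temb n m h) (temb n m h) *
        Matrix.diagonal (b ∘ temb n m h) := by
  ext i j
  simp [Matrix.mul_diagonal, Matrix.diagonal_mul, mul_assoc]

lemma pos_real_sq_one {x : ℂ} (hre : 0 < x.re) (him : x.im = 0) (hsq : x ^ 2 = 1) : x = 1 := by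
  have hx : x = (x.re : ℂ) := Complex.ext rfl (by simp [him])
  rw [hx] at hsq
  have : ((x.re ^ 2 : ℝ) : ℂ) = ((1 : ℝ) : ℂ) := by push_cast; exact hsq
  have h2 : x.re ^ 2 = 1 := Complex.ofReal_inj.1 this
  have h3 : (x.re - 1) * (x.re + 1) = 0 := by ring_nf; linarith
  rcases mul_eq_zero.1 h3 with h' | h'
  · rw [hx]; norm_num; linarith
  · linarith

lemma diag_one_of_gram (w : Fin n → ℂ) (hw : ∀ i, 0 < (w i).re ∧ (w i).im = 0)
    (l₁ l₂ : Matrix (Fin n) (Fin n) ℂ) (h₁ : IsLowerUni l₁) (h₂ : IsLowerUni l₂)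
    (heq : l₁ᴴ * l₁ = (Matrix.diagonal w)ᴴ * (l₂ᴴ * l₂) * Matrix.diagonal w) :
    ∀ i, w i = 1 := by
  have hstar : ∀ i, star (w i) = w i := by
    intro i
    exact Complex.conj_eq_iff_im.2 (hw i).2
  have key : ∀ m (h : m ≤ n), ∏ i : Fin m, (w (temb n m h i)) ^ 2 = 1 := by
    intro m h
    have hdet1 : ((l₁ᴴ * l₁).submatrix (temb n m h) (temb n m h)).det = 1 := det_trail_gram h₁ h
    have hds : (Matrix.diagonal w)ᴴ = Matrix.diagonal (fun i => star (w i)) := by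
      rw [Matrix.diagonal_conjTranspose]
      rfl
    rw [heq, hds, trail_diag_sandwich, Matrix.det_mul, Matrix.det_mul,
      Matrix.det_diagonal, Matrix.det_diagonal, det_trail_gram h₂ h] at hdet1
    rw [← hdet1, mul_one, ← Finset.prod_mul_distrib]
    apply Finset.prod_congr rfl
    intro i _
    simp only [Function.comp_apply, hstar]
    ring
  -- downward induction
  have main : ∀ m, m ≤ n → ∀ i : Fin n, n - m ≤ i.val → w i = 1 := by
    intro m
    induction m with
    | zero => intro h i hi; omega
    | succ m ih =>
      intro h i hi
      by_cases hc : n - m ≤ i.val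
      · exact ih (le_of_lt h) i hc
      · push_neg at hc
        have hival : i.val = n - (m + 1) := by omega
        have hi0 : i = temb n (m + 1) h 0 := by
          ext
          simp [temb, hival]
        have hk := key (m + 1) h
        rw [Fin.prod_univ_succ] at hk
        have hrest : ∀ k : Fin m, w (temb n (m + 1) h k.succ) = 1 := by
          intro k
          apply ih (le_of_lt h)
          simp [temb]
          omega
        have hprod : ∏ k : Fin m, (w (temb n (m + 1) h k.succ)) ^ 2 = 1 := by
          apply Finset.prod_eq_one
          intro k _
          rw [hrest k, one_pow]
        rw [hprod, mul_one] at hk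
        rw [hi0]
        exact pos_real_sq_one (hw _).1 (hw _).2 hk
  intro i
  exact main n (le_refl n) i (by omega)




lemma gram_of_cellD {u : Matrix (Fin n) (Fin n) ℂ} (hu : InCellD u) :
    ∃ l' : Matrix (Fin n) (Fin n) ℂ, IsLowerUni l' ∧ l'ᴴ * l' = uᴴ * u := by
  obtain ⟨_, l', k, hl', hk, hfac⟩ := hu
  refine ⟨l', hl', ?_⟩
  rw [hfac, Matrix.conjTranspose_mul, Matrix.mul_assoc, ← Matrix.mul_assoc kᴴ k u, hk, one_mul]

lemma inj_core (d : Fin n → ℂ) (hd : Function.Injective d)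
    (u₁ u₂ l₁ l₂ : Matrix (Fin n) (Fin n) ℂ)
    (hu₁ : InCellD u₁) (hu₂ : InCellD u₂) (hl₁ : IsLowerUni l₁) (hl₂ : IsLowerUni l₂)
    (heq : u₁ * (l₁⁻¹ * Matrix.diagonal d * l₁) * u₁⁻¹ =
      u₂ * (l₂⁻¹ * Matrix.diagonal d * l₂) * u₂⁻¹) :
    u₁ = u₂ ∧ l₁ = l₂ := by
  have hU₁ := hu₁.1
  have hU₂ := hu₂.1
  have du₁ := hU₁.det_isUnit
  have du₂ := hU₂.det_isUnit
  have dl₁ := hl₁.det_isUnit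
  have dl₂ := hl₂.det_isUnit
  set D := Matrix.diagonal d with hD
  set v := u₂⁻¹ * u₁ with hv
  have hvU : IsUpperPos v := hU₂.inv.mul hU₁
  set g := l₂ * v * l₁⁻¹ with hg
  -- g commutes with D
  have hcomm : g * D = D * g := by
    have h0 := congrArg (fun X => (l₂ * u₂⁻¹) * X * (u₁ * l₁⁻¹)) heq
    calc g * D = (l₂ * u₂⁻¹) * (u₁ * (l₁⁻¹ * D * l₁) * u₁⁻¹) * (u₁ * l₁⁻¹) := by
          simp only [Matrix.mul_assoc, Matrix.nonsing_inv_mul_cancel_left _ _ du₁,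
            Matrix.mul_nonsing_inv_cancel_left _ _ dl₁, Matrix.nonsing_inv_mul_cancel_left _ _ dl₁,
            Matrix.nonsing_inv_mul _ dl₁, Matrix.mul_nonsing_inv _ dl₁,
            Matrix.mul_one, Matrix.one_mul, hg, hv]
      _ = (l₂ * u₂⁻¹) * (u₂ * (l₂⁻¹ * D * l₂) * u₂⁻¹) * (u₁ * l₁⁻¹) := by rw [h0]
      _ = D * g := by
          simp only [Matrix.mul_assoc, Matrix.nonsing_inv_mul_cancel_left _ _ du₂,
            Matrix.mul_nonsing_inv_cancel_left _ _ du₂, Matrix.mul_nonsing_inv_cancel_left _ _ dl₂,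
            Matrix.nonsing_inv_mul_cancel_left _ _ dl₂,
            Matrix.mul_one, Matrix.one_mul, hg, hv]
  -- g is diagonal
  have hgoff : ∀ i j : Fin n, i ≠ j → g i j = 0 := fun i j hij =>
    comm_diagonal_offdiag hd hcomm hij
  have hvg : v = l₂⁻¹ * (g * l₁) := by
    rw [hg]
    simp only [Matrix.mul_assoc, Matrix.nonsing_inv_mul _ dl₁, Matrix.mul_one,
      Matrix.nonsing_inv_mul_cancel_left _ _ dl₂]
  -- v is diagonal with diagonal equal to that of g
  set w : Fin n → ℂ := fun i => v i i with hw
  have hvlow : ∀ i j : Fin n, i < j → v i j = 0 := by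
    intro i j hij
    rw [hvg]
    have hbg : BlockTriangular g OrderDual.toDual := fun a b hab => hgoff a b (ne_of_lt hab)
    exact (hl₂.inv.bt.mul (hbg.mul hl₁.bt)) hij
  have hvdiag : v = Matrix.diagonal w := by
    ext i j
    rcases lt_trichotomy i j with h | h | h
    · rw [hvlow i j h, Matrix.diagonal_apply_ne _ (ne_of_lt h)]
    · subst h; rw [Matrix.diagonal_apply_eq]
    · rw [hvU.2 i j h, Matrix.diagonal_apply_ne _ (ne_of_gt h)]
  have hgv : g = v := by
    have hdiagg : ∀ i, g i i = v i i := by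
      intro i
      have h1 : v i i = (l₂⁻¹ * (g * l₁)) i i := by rw [← hvg]
      have hbg : ∀ a b : Fin n, a < b → g a b = 0 := fun a b hab => hgoff a b (ne_of_lt hab)
      have hbgBT : BlockTriangular g OrderDual.toDual := fun a b hab => hbg a b hab
      have hbgl : ∀ a b : Fin n, a < b → (g * l₁) a b = 0 := fun a b hab =>
        (hbgBT.mul hl₁.bt) hab
      rw [diag_mul_lower hl₂.inv.2 hbgl, diag_mul_lower hbg hl₁.2, hl₂.inv.1, hl₁.1,
        one_mul, mul_one] at h1
      exact h1.symm
    ext i j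
    by_cases h : i = j
    · subst h; exact hdiagg i
    · rw [hgoff i j h, hvdiag, Matrix.diagonal_apply_ne _ h]
  -- u₁ = u₂ * v
  have hu12 : u₁ = u₂ * v := by
    rw [hv, Matrix.mul_nonsing_inv_cancel_left _ _ du₂]
  -- gram relation
  obtain ⟨l₁', hl₁', hg₁⟩ := gram_of_cellD hu₁
  obtain ⟨l₂', hl₂', hg₂⟩ := gram_of_cellD hu₂
  have hgram : l₁'ᴴ * l₁' = (Matrix.diagonal w)ᴴ * (l₂'ᴴ * l₂') * Matrix.diagonal w := by
    rw [hg₁, hg₂, hu12, hvdiag, Matrix.conjTranspose_mul]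
    noncomm_ring
  have hwpos : ∀ i, 0 < (w i).re ∧ (w i).im = 0 := fun i => hvU.1 i
  have hwone : ∀ i, w i = 1 := diag_one_of_gram w hwpos l₁' l₂' hl₁' hl₂' hgram
  have hvone : v = 1 := by
    rw [hvdiag]
    have : w = fun _ => 1 := funext hwone
    rw [this, Matrix.diagonal_one]
  constructor
  · rw [hu12, hvone, Matrix.mul_one]
  · -- l₂ * v = g * l₁ with g = v = 1
    have h2 : l₂ * v = g * l₁ := by
      rw [hvg, Matrix.mul_nonsing_inv_cancel_left _ _ dl₂]
    rw [hgv, hvone, Matrix.mul_one, Matrix.one_mul] at h2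
    exact h2.symm

end Aux

/-- The two chart parametrizations have the same image, and `(u,l) ↦ u·(l⁻¹·Λ·l)·u⁻¹`
is injective on `D × L`. -/
theorem stmt8 (n : ℕ) (hn : 0 < n) (d : Fin n → ℂ) (hd : Function.Injective d) :
    ({X : Matrix (Fin n) (Fin n) ℂ | ∃ k l : Matrix (Fin n) (Fin n) ℂ,
        InBigCell k ∧ IsLowerUni l ∧
          X = (l * k)⁻¹ * Matrix.diagonal d * (l * k)} =
      {X : Matrix (Fin n) (Fin n) ℂ | ∃ u l : Matrix (Fin n) (Fin n) ℂ,
        InCellD u ∧ IsLowerUni l ∧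
          X = u * (l⁻¹ * Matrix.diagonal d * l) * u⁻¹}) ∧
    (∀ u₁ u₂ l₁ l₂ : Matrix (Fin n) (Fin n) ℂ,
      InCellD u₁ → InCellD u₂ → IsLowerUni l₁ → IsLowerUni l₂ →
      u₁ * (l₁⁻¹ * Matrix.diagonal d * l₁) * u₁⁻¹ =
        u₂ * (l₂⁻¹ * Matrix.diagonal d * l₂) * u₂⁻¹ →
      u₁ = u₂ ∧ l₁ = l₂) := by
  constructor
  · ext X
    simp only [Set.mem_setOf_eq]
    constructor
    · rintro ⟨k, l, ⟨hkU, l₀, u₀, hl₀, hu₀, hfac⟩, hl, rfl⟩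
      refine ⟨u₀⁻¹, l * l₀, ⟨hu₀.inv, l₀, k, hl₀, hkU, ?_⟩, hl.mul hl₀, ?_⟩
      · rw [hfac, Matrix.mul_nonsing_inv_cancel_right _ _ hu₀.det_isUnit]
      · rw [Matrix.nonsing_inv_nonsing_inv _ hu₀.det_isUnit, hfac]
        simp only [Matrix.mul_inv_rev, Matrix.mul_assoc]
    · rintro ⟨u, l, ⟨huU, l₀, k₀, hl₀, hk₀, hfac⟩, hl, rfl⟩
      have hk₀eq : k₀ = l₀ * u⁻¹ := by
        rw [hfac, Matrix.mul_nonsing_inv_cancel_right _ _ huU.det_isUnit]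
      refine ⟨k₀, l * l₀⁻¹, ⟨hk₀, l₀, u⁻¹, hl₀, huU.inv, hk₀eq⟩, hl.mul hl₀.inv, ?_⟩
      have hmk : l * l₀⁻¹ * k₀ = l * u⁻¹ := by
        rw [hk₀eq]
        simp only [Matrix.mul_assoc, Matrix.nonsing_inv_mul_cancel_left _ _ hl₀.det_isUnit]
      rw [hmk, Matrix.mul_inv_rev, Matrix.nonsing_inv_nonsing_inv _ huU.det_isUnit]
      simp only [Matrix.mul_assoc]
  · intro u₁ u₂ l₁ l₂ hu₁ hu₂ hl₁ hl₂ heq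
    exact inj_core d hd u₁ u₂ l₁ l₂ hu₁ hu₂ hl₁ hl₂ heq
end

section
/- Let Λ be a diagonal n×n complex matrix with pairwise distinct diagonal entries. If k ∈ C and l ∈ L are such that (l·k)⁻¹·Λ·(l·k) is a diagonal matrix, then (l·k)⁻¹·Λ·(l·k) = Λ; that is, Λ is the only diagonal matrix in the chart domain {(l·k)⁻¹·Λ·(l·k) : k ∈ C, l ∈ L}. -/
open Matrix

/-- Diagonal entry of a product of two lower-triangular matrices. -/
lemma diag_mul_low {n : ℕ} {A B : Matrix (Fin n) (Fin n) ℂ}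
    (hA : ∀ i j : Fin n, i < j → A i j = 0) (hB : ∀ i j : Fin n, i < j → B i j = 0)
    (i : Fin n) : (A * B) i i = A i i * B i i := by
  rw [Matrix.mul_apply]
  refine Finset.sum_eq_single i (fun m _ hm => ?_) (by simp)
  rcases lt_or_gt_of_ne hm with h | h
  · rw [hB m i h, mul_zero]
  · rw [hA i m h, zero_mul]

/-- Diagonal entry of a product of two upper-triangular matrices. -/
lemma diag_mul_up {n : ℕ} {A B : Matrix (Fin n) (Fin n) ℂ}
    (hA : ∀ i j : Fin n, j < i → A i j = 0) (hB : ∀ i j : Fin n, j < i → B i j = 0)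
    (i : Fin n) : (A * B) i i = A i i * B i i := by
  rw [Matrix.mul_apply]
  refine Finset.sum_eq_single i (fun m _ hm => ?_) (by simp)
  rcases lt_or_gt_of_ne hm with h | h
  · rw [hA i m h, zero_mul]
  · rw [hB m i h, mul_zero]

/-- `Λ` is the only diagonal matrix in the chart domain
`{(l·k)⁻¹·Λ·(l·k) : k ∈ C, l ∈ L}`. -/
theorem stmt10 (n : ℕ) (hn : 0 < n) (d : Fin n → ℂ) (hd : Function.Injective d)
    (k l : Matrix (Fin n) (Fin n) ℂ) (hk : InBigCell k) (hl : IsLowerUni l)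
    (hdiag : ∃ e : Fin n → ℂ,
      (l * k)⁻¹ * Matrix.diagonal d * (l * k) = Matrix.diagonal e) :
    (l * k)⁻¹ * Matrix.diagonal d * (l * k) = Matrix.diagonal d := by
  obtain ⟨hkU, l', u, hl', hu, hke⟩ := hk
  obtain ⟨e, he⟩ := hdiag
  set L₀ := l * l' with hL₀def
  have hLK : l * k = L₀ * u := by rw [hke, hL₀def, Matrix.mul_assoc]
  -- L₀ is lower unitriangular
  have hL₀low : ∀ i j : Fin n, i < j → L₀ i j = 0 := by
    intro i j hij
    rw [hL₀def, Matrix.mul_apply]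
    apply Finset.sum_eq_zero
    intro m _
    rcases lt_or_ge i m with h | h
    · rw [hl.2 i m h, zero_mul]
    · rw [hl'.2 m j (lt_of_le_of_lt h hij), mul_zero]
  have hL₀diag : ∀ i, L₀ i i = 1 := by
    intro i
    rw [hL₀def, diag_mul_low hl.2 hl'.2, hl.1 i, hl'.1 i, one_mul]
  -- determinants
  have hudiag_ne : ∀ i, u i i ≠ 0 := by
    intro i h
    have := (hu.1 i).1
    rw [h] at this
    simp at this
  have hdetu : IsUnit u.det := by
    have : u.det = ∏ i, u i i := by
      apply Matrix.det_of_upperTriangular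
      intro i j hij
      exact hu.2 i j hij
    rw [this, isUnit_iff_ne_zero]
    exact Finset.prod_ne_zero_iff.mpr fun i _ => hudiag_ne i
  have hdetL : IsUnit L₀.det := by
    have : L₀.det = ∏ i, L₀ i i := Matrix.det_of_lowerTriangular L₀ (fun i j hij => hL₀low i j hij)
    rw [this]
    simp [hL₀diag]
  have hdetg : IsUnit (l * k).det := by
    rw [hLK, Matrix.det_mul]
    exact hdetL.mul hdetu
  -- from he : g⁻¹ Λ g = diag e, get Λ g = g diag e
  have h1 : Matrix.diagonal d * (l * k) = (l * k) * Matrix.diagonal e := by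
    have := congrArg (fun M => (l * k) * M) he
    rw [Matrix.mul_assoc ((l*k)⁻¹) (Matrix.diagonal d) (l*k),
      Matrix.mul_nonsing_inv_cancel_left _ _ hdetg] at this
    exact this
  -- conjugate: L₀⁻¹ * (Λ L₀) = (u * diag e) * u⁻¹
  have h2 : L₀⁻¹ * (Matrix.diagonal d * L₀) = u * Matrix.diagonal e * u⁻¹ := by
    rw [hLK] at h1
    have h3 : Matrix.diagonal d * L₀ * u = L₀ * (u * Matrix.diagonal e) := by
      rw [Matrix.mul_assoc, h1, Matrix.mul_assoc]
    have h4 := congrArg (fun M => L₀⁻¹ * M * u⁻¹) h3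
    rw [Matrix.nonsing_inv_mul_cancel_left _ _ hdetL] at h4
    rw [← Matrix.mul_assoc L₀⁻¹ (Matrix.diagonal d * L₀) u,
      Matrix.mul_nonsing_inv_cancel_right _ _ hdetu] at h4
    exact h4
  -- triangularity of inverses
  haveI : Invertible L₀ := L₀.invertibleOfIsUnitDet hdetL
  haveI : Invertible u := u.invertibleOfIsUnitDet hdetu
  have hLinv_low : ∀ i j : Fin n, i < j → L₀⁻¹ i j = 0 := by
    have hbt : L₀.BlockTriangular OrderDual.toDual := fun i j hij => hL₀low i j hij
    exact fun i j hij => (Matrix.blockTriangular_inv_of_blockTriangular hbt) hij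
  have huinv_up : ∀ i j : Fin n, j < i → u⁻¹ i j = 0 := by
    have hbt : u.BlockTriangular id := fun i j hij => hu.2 i j hij
    exact fun i j hij => (Matrix.blockTriangular_inv_of_blockTriangular hbt) hij
  -- diagonal entries of inverses
  have hLinv_diag : ∀ i, L₀⁻¹ i i = 1 := by
    intro i
    have := congrArg (fun M => M i i) (Matrix.nonsing_inv_mul L₀ hdetL)
    rw [diag_mul_low hLinv_low hL₀low, hL₀diag, mul_one] at this
    simpa using this
  have huinv_diag : ∀ i, u i i * u⁻¹ i i = 1 := by
    intro i
    have := congrArg (fun M => M i i) (Matrix.mul_nonsing_inv u hdetu)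
    rw [diag_mul_up (fun i j h => hu.2 i j h) huinv_up] at this
    simpa using this
  -- diagonal of LHS of h2 is d, of RHS is e
  have key : ∀ i, d i = e i := by
    intro i
    have hDL_low : ∀ a b : Fin n, a < b → (Matrix.diagonal d * L₀) a b = 0 := by
      intro a b hab
      rw [Matrix.diagonal_mul, hL₀low a b hab, mul_zero]
    have hEU_up : ∀ a b : Fin n, b < a → (Matrix.diagonal e * u⁻¹) a b = 0 := by
      intro a b hab
      rw [Matrix.diagonal_mul, huinv_up a b hab, mul_zero]
    have hL := congrArg (fun M => M i i) h2
    rw [diag_mul_low hLinv_low hDL_low, hLinv_diag, one_mul, Matrix.diagonal_mul,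
      hL₀diag, mul_one] at hL
    rw [Matrix.mul_assoc, diag_mul_up (fun a b h => hu.2 a b h) hEU_up,
      Matrix.diagonal_mul] at hL
    calc d i = u i i * (e i * u⁻¹ i i) * 1 := by rw [hL, mul_one]
    _ = e i * (u i i * u⁻¹ i i) := by ring
    _ = e i := by rw [huinv_diag i, mul_one]
  have : e = d := funext fun i => (key i).symm
  rw [he, this]
end

section
/- Symes' formula solves the Toda differential equation: let X be an n×n complex matrix and let k, u : ℝ → M_n(ℂ) be differentiable curves such that for every t ∈ ℝ, k(t) is unitary, u(t) is upper triangular with strictly positive real diagonal entries, and exp(t·X) = k(t)·u(t). Then the curve Y(t) := k(t)*·X·k(t) satisfies, for every t, the derivative identity Y'(t) = Y(t)·π(Y(t)) − π(Y(t))·Y(t). -/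
open Matrix

/-- The strictly lower triangular part `X₋` of a matrix. -/
def lowerPart {n : ℕ} (X : Matrix (Fin n) (Fin n) ℂ) : Matrix (Fin n) (Fin n) ℂ :=
  Matrix.of fun i j => if j < i then X i j else 0

/-- The Iwasawa projection `π(X) = X₋ − (X₋)* + i·Im(diag X)`, the unique
skew-Hermitian matrix such that `X − π(X)` is upper triangular with real diagonal. -/
def iwasawaProj {n : ℕ} (X : Matrix (Fin n) (Fin n) ℂ) : Matrix (Fin n) (Fin n) ℂ :=
  lowerPart X - (lowerPart X)ᴴ + Matrix.diagonal fun i => Complex.I * ((X i i).im : ℂ)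

lemma exp_entry_hasDerivAt (n : ℕ) (X : Matrix (Fin n) (Fin n) ℂ) (t : ℝ) (i j : Fin n) :
    HasDerivAt (fun s : ℝ => NormedSpace.exp ((s : ℂ) • X) i j)
      ((X * NormedSpace.exp ((t : ℂ) • X)) i j) t := by
  letI : SeminormedRing (Matrix (Fin n) (Fin n) ℂ) := Matrix.linftyOpSemiNormedRing
  letI : NormedRing (Matrix (Fin n) (Fin n) ℂ) := Matrix.linftyOpNormedRing
  letI : NormedAlgebra ℝ (Matrix (Fin n) (Fin n) ℂ) := Matrix.linftyOpNormedAlgebra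
  have hsm : ∀ s : ℝ, ((s : ℂ) • X) = s • X := fun s => by
    rw [← algebraMap_smul ℂ s X, Complex.coe_algebraMap]
  have hee : (NormedSpace.exp : Matrix (Fin n) (Fin n) ℂ → Matrix (Fin n) (Fin n) ℂ)
      = NormedSpace.exp := rfl
  have h1 : HasDerivAt (fun s : ℝ => NormedSpace.exp (s • X))
      (X * NormedSpace.exp (t • X)) t := hasDerivAt_exp_smul_const' X t
  let L : Matrix (Fin n) (Fin n) ℂ →ₗ[ℝ] ℂ :=
    { toFun := fun A => A i j, map_add' := fun _ _ => rfl, map_smul' := fun _ _ => rfl }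
  have hL : Continuous L := L.continuous_of_finiteDimensional
  have h2 : HasDerivAt (fun s : ℝ => (NormedSpace.exp (s • X)) i j)
      ((X * NormedSpace.exp (t • X)) i j) t :=
    (⟨L, hL⟩ : Matrix (Fin n) (Fin n) ℂ →L[ℝ] ℂ).hasFDerivAt.comp_hasDerivAt t h1
  simpa only [hsm] using h2

lemma entry_mul_hasDerivAt {n : ℕ} {A B : ℝ → Matrix (Fin n) (Fin n) ℂ}
    {A' B' : Matrix (Fin n) (Fin n) ℂ} {t : ℝ}
    (hA : ∀ i j, HasDerivAt (fun s => A s i j) (A' i j) t)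
    (hB : ∀ i j, HasDerivAt (fun s => B s i j) (B' i j) t) (i j : Fin n) :
    HasDerivAt (fun s => (A s * B s) i j) ((A' * B t + A t * B') i j) t := by
  simp only [Matrix.mul_apply, Matrix.add_apply]
  rw [← Finset.sum_add_distrib]
  exact HasDerivAt.fun_sum fun l _ => (hA i l).mul (hB l j)

lemma proj_unique {n : ℕ} {P Q Y : Matrix (Fin n) (Fin n) ℂ}
    (hPQ : P + Q = Y) (hPs : Pᴴ = -P) (hQu : Q.BlockTriangular id)
    (hQd : ∀ i, (Q i i).im = 0) : P = iwasawaProj Y := by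
  have hY : ∀ a b, Y a b = P a b + Q a b := by
    intro a b; rw [← hPQ]; rfl
  have hPsk : ∀ a b, (starRingEnd ℂ) (P b a) = -P a b := by
    intro a b
    have := congrFun (congrFun hPs a) b
    simpa [Matrix.conjTranspose_apply, Matrix.neg_apply] using this
  ext i j
  simp only [iwasawaProj, lowerPart, Matrix.add_apply, Matrix.sub_apply, Matrix.of_apply,
    Matrix.conjTranspose_apply, Matrix.diagonal_apply]
  rcases lt_trichotomy i j with h | h | h
  · rw [if_neg (asymm h), if_pos h, if_neg (ne_of_lt h)]
    rw [hY j i, hQu (show (id i : Fin n) < id j from h)]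
    simp only [add_zero, zero_sub]
    rw [show (star (P j i) : ℂ) = (starRingEnd ℂ) (P j i) from rfl, hPsk i j, neg_neg]
  · subst h
    rw [if_neg (lt_irrefl i), if_pos rfl]
    simp only [star_zero, sub_zero, zero_add]
    have hre : (P i i).re = 0 := by
      have := congrArg Complex.re (hPsk i i)
      simp only [Complex.conj_re, Complex.neg_re] at this
      linarith
    have him : (Y i i).im = (P i i).im := by
      rw [hY i i, Complex.add_im, hQd i, add_zero]
    apply Complex.ext <;>
      simp [him, hre, Complex.mul_re, Complex.mul_im]
  · rw [if_pos h, if_neg (asymm h), if_neg (ne_of_gt h)]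
    rw [hY i j, hQu (show (id j : Fin n) < id i from h), add_zero]
    simp

/-- Symes' formula solves the Toda differential equation: if `exp(t·X) = k(t)·u(t)`
with `k(t)` unitary and `u(t) ∈ U`, then `Y(t) = k(t)*·X·k(t)` satisfies
`Y' = Y·π(Y) − π(Y)·Y`. -/
theorem stmt12 (n : ℕ) (hn : 0 < n) (X : Matrix (Fin n) (Fin n) ℂ)
    (k u : ℝ → Matrix (Fin n) (Fin n) ℂ)
    (hdk : ∀ i j : Fin n, Differentiable ℝ fun t => k t i j)
    (hdu : ∀ i j : Fin n, Differentiable ℝ fun t => u t i j)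
    (hk : ∀ t : ℝ, IsUnitaryMat (k t)) (hu : ∀ t : ℝ, IsUpperPos (u t))
    (hfac : ∀ t : ℝ, NormedSpace.exp ((t : ℂ) • X) = k t * u t) :
    ∀ (t : ℝ) (i j : Fin n),
      HasDerivAt (fun s : ℝ => ((k s)ᴴ * X * k s) i j)
        ((((k t)ᴴ * X * k t) * iwasawaProj ((k t)ᴴ * X * k t)
          - iwasawaProj ((k t)ᴴ * X * k t) * ((k t)ᴴ * X * k t)) i j) t := by
  intro t i j
  classical
  set K' : Matrix (Fin n) (Fin n) ℂ := Matrix.of fun a b => deriv (fun s => k s a b) t with hK'def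
  set U' : Matrix (Fin n) (Fin n) ℂ := Matrix.of fun a b => deriv (fun s => u s a b) t with hU'def
  have hK : ∀ a b, HasDerivAt (fun s => k s a b) (K' a b) t := fun a b => ((hdk a b) t).hasDerivAt
  have hU : ∀ a b, HasDerivAt (fun s => u s a b) (U' a b) t := fun a b => ((hdu a b) t).hasDerivAt
  have hKH : ∀ a b, HasDerivAt (fun s => (k s)ᴴ a b) (K'ᴴ a b) t := by
    intro a b
    simpa only [Matrix.conjTranspose_apply] using (hK b a).star
  have hkt : (k t)ᴴ * k t = 1 := hk t
  have hkkt : k t * (k t)ᴴ = 1 := mul_eq_one_comm.mp hkt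
  have hKU : ∀ a b, HasDerivAt (fun s => (k s * u s) a b) ((X * (k t * u t)) a b) t := by
    intro a b
    have h := exp_entry_hasDerivAt n X t a b
    simp only [hfac] at h
    exact h
  have f1 : K' * u t + k t * U' = X * (k t * u t) := by
    ext a b
    exact (entry_mul_hasDerivAt hK hU a b).unique (hKU a b)
  have f2 : K'ᴴ * k t + (k t)ᴴ * K' = 0 := by
    ext a b
    have h1 := entry_mul_hasDerivAt hKH hK a b
    have h0 : HasDerivAt (fun s => ((k s)ᴴ * k s) a b) 0 t := by
      have he : (fun s => ((k s)ᴴ * k s) a b) = fun _ => (1 : Matrix (Fin n) (Fin n) ℂ) a b := by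
        funext s; rw [show (k s)ᴴ * k s = 1 from hk s]
      rw [he]; exact hasDerivAt_const _ _
    rw [Matrix.zero_apply]
    exact h1.unique h0
  have hU'u : U'.BlockTriangular id := by
    intro a b hab
    have h0 : HasDerivAt (fun s => u s a b) 0 t := by
      have hc : (fun s => u s a b) = fun _ => (0 : ℂ) := funext fun s => (hu s).2 a b hab
      rw [hc]; exact hasDerivAt_const _ _
    exact (hU a b).unique h0
  have hU'im : ∀ a, (U' a a).im = 0 := by
    intro a
    have h1 : HasDerivAt (fun s => (u s a a).im) ((U' a a).im) t :=
      Complex.imCLM.hasFDerivAt.comp_hasDerivAt t (hU a a)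
    have h0 : HasDerivAt (fun s => (u s a a).im) 0 t := by
      have hc : (fun s => (u s a a).im) = fun _ => (0 : ℝ) :=
        funext fun s => ((hu s).1 a).2
      rw [hc]; exact hasDerivAt_const _ _
    exact h1.unique h0
  -- algebraic part
  have hut : (u t).BlockTriangular id := fun a b hab => (hu t).2 a b hab
  have hdet : IsUnit (u t).det := by
    rw [Matrix.det_of_upperTriangular hut]
    refine isUnit_iff_ne_zero.mpr (Finset.prod_ne_zero_iff.mpr fun a _ => ?_)
    intro h
    have := ((hu t).1 a).1
    rw [h] at this; simp at this
  letI : Invertible (u t) := (u t).invertibleOfIsUnitDet hdet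
  have hUinv : u t * (u t)⁻¹ = 1 := Matrix.mul_nonsing_inv _ hdet
  set P := (k t)ᴴ * K' with hPdef
  set Q := U' * (u t)⁻¹ with hQdef
  set Y := (k t)ᴴ * X * k t with hYdef
  have hPQ : P + Q = Y := by
    have e1 : (k t)ᴴ * (K' * u t + k t * U') * (u t)⁻¹ = P + Q := by
      rw [mul_add, add_mul, hPdef, hQdef]
      rw [← Matrix.mul_assoc, Matrix.mul_assoc ((k t)ᴴ * K'), hUinv, Matrix.mul_one,
        ← Matrix.mul_assoc (k t)ᴴ (k t) U', hkt, Matrix.one_mul]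
    have e2 : (k t)ᴴ * (X * (k t * u t)) * (u t)⁻¹ = Y := by
      rw [hYdef, ← Matrix.mul_assoc, ← Matrix.mul_assoc, Matrix.mul_assoc ((k t)ᴴ * X * k t),
        hUinv, Matrix.mul_one]
    rw [← e1, ← e2, f1]
  have hPs : Pᴴ = -P := by
    have h : Pᴴ = K'ᴴ * k t := by
      rw [hPdef, Matrix.conjTranspose_mul, Matrix.conjTranspose_conjTranspose]
    rw [h, eq_neg_of_add_eq_zero_left f2]
  have hUinvu : (u t)⁻¹.BlockTriangular id := Matrix.blockTriangular_inv_of_blockTriangular hut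
  have hQu : Q.BlockTriangular id := hU'u.mul hUinvu
  have hUinvdiag : ∀ a, ((u t)⁻¹ a a).im = 0 := by
    intro a
    have h1 : (u t * (u t)⁻¹) a a = u t a a * (u t)⁻¹ a a := by
      rw [Matrix.mul_apply]
      refine Finset.sum_eq_single a (fun l _ hl => ?_) (by simp)
      rcases lt_or_gt_of_ne hl with h | h
      · rw [hut h, zero_mul]
      · rw [hUinvu h, mul_zero]
    rw [hUinv] at h1
    simp only [Matrix.one_apply_eq] at h1
    have him := congrArg Complex.im h1.symm
    rw [Complex.mul_im, ((hu t).1 a).2] at him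
    simp only [Complex.one_im, zero_mul, add_zero] at him
    rcases mul_eq_zero.mp him with h | h
    · exact absurd h (ne_of_gt ((hu t).1 a).1)
    · exact h
  have hQdiag : ∀ a, (Q a a).im = 0 := by
    intro a
    have h1 : Q a a = U' a a * (u t)⁻¹ a a := by
      rw [hQdef, Matrix.mul_apply]
      refine Finset.sum_eq_single a (fun l _ hl => ?_) (by simp)
      rcases lt_or_gt_of_ne hl with h | h
      · rw [hU'u h, zero_mul]
      · rw [hUinvu h, mul_zero]
    rw [h1, Complex.mul_im, hU'im a, hUinvdiag a]
    ring
  have hP : P = iwasawaProj Y := proj_unique hPQ hPs hQu hQdiag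
  -- final derivative computation
  have hXc : ∀ a b, HasDerivAt (fun _ : ℝ => X a b) ((0 : Matrix (Fin n) (Fin n) ℂ) a b) t := by
    intro a b; rw [Matrix.zero_apply]; exact hasDerivAt_const _ _
  have hKHX : ∀ a b, HasDerivAt (fun s => ((k s)ᴴ * X) a b) ((K'ᴴ * X) a b) t := by
    intro a b
    have h := entry_mul_hasDerivAt hKH hXc a b
    simpa using h
  have hfin : HasDerivAt (fun s => ((k s)ᴴ * X * k s) i j)
      ((K'ᴴ * X * k t + (k t)ᴴ * X * K') i j) t :=
    entry_mul_hasDerivAt hKHX hK i j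
  have hval : K'ᴴ * X * k t + (k t)ᴴ * X * K' = Y * iwasawaProj Y - iwasawaProj Y * Y := by
    rw [← hP]
    have hK'eq : K' = k t * P := by
      rw [hPdef, ← Matrix.mul_assoc, hkkt, Matrix.one_mul]
    have hK'H : K'ᴴ = -(P * (k t)ᴴ) := by
      rw [hK'eq, Matrix.conjTranspose_mul, hPs]
      simp [neg_mul]
    rw [hK'H, hK'eq, hYdef]
    noncomm_ring
  rw [hval] at hfin
  exact hfin
end

section
/- Symes' formula for the Toda hierarchy: let X be an n×n complex matrix, let p be a polynomial with complex coefficients, and let k, u : ℝ → M_n(ℂ) be differentiable curves such that for every t ∈ ℝ, k(t) is unitary, u(t) is upper triangular with strictly positive real diagonal entries, and exp(t·p(X)) = k(t)·u(t), where p(X) denotes the evaluation of p at the matrix X. Then the curve Y(t) := k(t)*·X·k(t) satisfies, for every t, the derivative identity Y'(t) = Y(t)·π(p(Y(t))) − π(p(Y(t)))·Y(t). -/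
open Matrix

/-! ### Auxiliary machinery -/

section aux
variable {n : ℕ}

/-- Entrywise matrix derivative. -/
def HasMDerivAt (A : ℝ → Matrix (Fin n) (Fin n) ℂ) (A' : Matrix (Fin n) (Fin n) ℂ) (t : ℝ) : Prop :=
  ∀ i j, HasDerivAt (fun s => A s i j) (A' i j) t

lemma HasMDerivAt.mul {A B : ℝ → Matrix (Fin n) (Fin n) ℂ} {A' B' : Matrix (Fin n) (Fin n) ℂ}
    {t : ℝ} (hA : HasMDerivAt A A' t) (hB : HasMDerivAt B B' t) :
    HasMDerivAt (fun s => A s * B s) (A' * B t + A t * B') t := by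
  intro i j
  have h : ∀ l ∈ Finset.univ, HasDerivAt (fun s => A s i l * B s l j)
      (A' i l * B t l j + A t i l * B' l j) t := fun l _ => (hA i l).mul (hB l j)
  have := HasDerivAt.fun_sum h
  simpa [Matrix.mul_apply, Matrix.add_apply, Finset.sum_add_distrib] using this

lemma HasMDerivAt.const (M : Matrix (Fin n) (Fin n) ℂ) (t : ℝ) :
    HasMDerivAt (fun _ => M) 0 t := fun i j => by
  simpa using hasDerivAt_const t (M i j)

lemma HasMDerivAt.conjTranspose {A : ℝ → Matrix (Fin n) (Fin n) ℂ} {A' : Matrix (Fin n) (Fin n) ℂ}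
    {t : ℝ} (hA : HasMDerivAt A A' t) :
    HasMDerivAt (fun s => (A s)ᴴ) A'ᴴ t := by
  intro i j
  have := ((Complex.conjCLE : ℂ →L[ℝ] ℂ).hasFDerivAt (x := A t j i)).comp_hasDerivAt t (hA j i)
  simpa [Matrix.conjTranspose_apply, Function.comp_def, Complex.conjCAE_apply] using this

lemma HasMDerivAt.unique {A : ℝ → Matrix (Fin n) (Fin n) ℂ} {A' B' : Matrix (Fin n) (Fin n) ℂ}
    {t : ℝ} (h1 : HasMDerivAt A A' t) (h2 : HasMDerivAt A B' t) : A' = B' := by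
  ext i j; exact (h1 i j).unique (h2 i j)

lemma HasMDerivAt.congr_fun {A B : ℝ → Matrix (Fin n) (Fin n) ℂ} {A' : Matrix (Fin n) (Fin n) ℂ}
    {t : ℝ} (h : HasMDerivAt A A' t) (hAB : ∀ s, B s = A s) : HasMDerivAt B A' t := by
  intro i j
  exact (h i j).congr_of_eventuallyEq
    (Filter.Eventually.of_forall fun s => congrArg (fun M => M i j) (hAB s))

section normed
attribute [local instance] Matrix.linftyOpNormedRing Matrix.linftyOpNormedAlgebra

noncomputable def entryCLM (i j : Fin n) : Matrix (Fin n) (Fin n) ℂ →L[ℂ] ℂ :=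
  LinearMap.toContinuousLinearMap
    { toFun := fun M => M i j
      map_add' := fun _ _ => rfl
      map_smul' := fun _ _ => rfl }

lemma hasMDerivAt_exp (P : Matrix (Fin n) (Fin n) ℂ) (t : ℝ) :
    HasMDerivAt (fun s : ℝ => NormedSpace.exp ((s : ℂ) • P))
      (P * NormedSpace.exp ((t : ℂ) • P)) t := by
  have h1 : HasDerivAt (fun z : ℂ => NormedSpace.exp (z • P))
      (P * NormedSpace.exp ((t : ℂ) • P)) (t : ℂ) := hasDerivAt_exp_smul_const' P (t : ℂ)
  have h2 : HasDerivAt (fun s : ℝ => NormedSpace.exp ((s : ℂ) • P))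
      (P * NormedSpace.exp ((t : ℂ) • P)) t := by
    have := h1.scomp t Complex.ofRealCLM.hasDerivAt
    simp only [Function.comp_def, Complex.ofRealCLM_apply, Complex.ofReal_one, one_smul] at this
    exact this
  intro i j
  have := ((entryCLM i j).restrictScalars ℝ).hasFDerivAt.comp_hasDerivAt t h2
  exact this

end normed

/-- The conjugation algebra homomorphism `M ↦ Kᴴ M K` for a unitary `K`. -/
noncomputable def conjAlgHom (K : Matrix (Fin n) (Fin n) ℂ)
    (h1 : Kᴴ * K = 1) (h2 : K * Kᴴ = 1) :
    Matrix (Fin n) (Fin n) ℂ →ₐ[ℂ] Matrix (Fin n) (Fin n) ℂ where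
  toFun := fun M => Kᴴ * M * K
  map_one' := by show Kᴴ * 1 * K = 1; rw [Matrix.mul_one, h1]
  map_mul' := fun M N => by
    calc Kᴴ * (M * N) * K = Kᴴ * M * (K * Kᴴ) * N * K := by
          rw [h2, Matrix.mul_one]; noncomm_ring
      _ = Kᴴ * M * K * (Kᴴ * N * K) := by noncomm_ring
  map_zero' := by simp
  map_add' := fun M N => by noncomm_ring
  commutes' := fun c => by
    simp [Algebra.algebraMap_eq_smul_one, Matrix.mul_smul, Matrix.smul_mul, Matrix.mul_one, h1]

lemma aeval_conj (K X : Matrix (Fin n) (Fin n) ℂ) (p : Polynomial ℂ)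
    (h1 : Kᴴ * K = 1) (h2 : K * Kᴴ = 1) :
    Polynomial.aeval (Kᴴ * X * K) p = Kᴴ * (Polynomial.aeval X p) * K := by
  have := Polynomial.aeval_algHom_apply (conjAlgHom K h1 h2) X p
  simpa [conjAlgHom] using this

lemma mul_diag_of_triangular (A B : Matrix (Fin n) (Fin n) ℂ)
    (hA : ∀ i j : Fin n, j < i → A i j = 0) (hB : ∀ i j : Fin n, j < i → B i j = 0)
    (i : Fin n) : (A * B) i i = A i i * B i i := by
  rw [Matrix.mul_apply]
  apply Finset.sum_eq_single i
  · intro l _ hl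
    rcases lt_or_gt_of_ne hl with h | h
    · rw [hA i l h, zero_mul]
    · rw [hB l i h, mul_zero]
  · intro h; exact absurd (Finset.mem_univ i) h

lemma iwasawaProj_add_eq (A T : Matrix (Fin n) (Fin n) ℂ)
    (hA : Aᴴ = -A) (hT : ∀ i j : Fin n, j < i → T i j = 0) (hTd : ∀ i, (T i i).im = 0) :
    iwasawaProj (A + T) = A := by
  have hAij : ∀ i j : Fin n, star (A j i) = -A i j := by
    intro i j
    have := congrFun (congrFun hA i) j
    simpa [Matrix.conjTranspose_apply, Matrix.neg_apply] using this
  ext i j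
  rcases lt_trichotomy i j with hij | hij | hij
  · have h1 : ¬ j < i := not_lt.mpr hij.le
    have h2 : i ≠ j := hij.ne
    simp only [iwasawaProj, Matrix.add_apply, Matrix.sub_apply, Matrix.conjTranspose_apply,
      lowerPart, Matrix.of_apply, Matrix.diagonal_apply_ne _ h2, if_neg h1, if_pos hij,
      add_zero]
    rw [hT j i hij, add_zero, hAij i j]
    ring
  · subst hij
    have h1 : ¬ i < i := lt_irrefl i
    have h2 := hAij i i
    have him : (A i i).re = 0 := by
      have := congrArg Complex.re h2
      simp [Complex.conj_re] at this
      linarith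
    have h3 : (A i i + T i i).im = (A i i).im := by simp [hTd i]
    simp only [iwasawaProj, Matrix.add_apply, Matrix.sub_apply, Matrix.conjTranspose_apply,
      lowerPart, Matrix.of_apply, Matrix.diagonal_apply_eq, if_neg h1, star_zero, sub_zero,
      zero_add, h3]
    apply Complex.ext <;> simp [him]
  · have h2 : i ≠ j := hij.ne'
    have h3 : ¬ i < j := not_lt.mpr hij.le
    simp only [iwasawaProj, Matrix.add_apply, Matrix.sub_apply, Matrix.conjTranspose_apply,
      lowerPart, Matrix.of_apply, Matrix.diagonal_apply_ne _ h2, if_pos hij, if_neg h3,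
      star_zero, sub_zero, add_zero]
    rw [hT i j hij]
    ring

end aux

/-- Symes' formula for the Toda hierarchy: if `exp(t·p(X)) = k(t)·u(t)` with `k(t)`
unitary and `u(t) ∈ U`, then `Y(t) = k(t)*·X·k(t)` satisfies
`Y' = Y·π(p(Y)) − π(p(Y))·Y`. -/
theorem stmt13 (n : ℕ) (hn : 0 < n) (X : Matrix (Fin n) (Fin n) ℂ) (p : Polynomial ℂ)
    (k u : ℝ → Matrix (Fin n) (Fin n) ℂ)
    (hdk : ∀ i j : Fin n, Differentiable ℝ fun t => k t i j)
    (hdu : ∀ i j : Fin n, Differentiable ℝ fun t => u t i j)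
    (hk : ∀ t : ℝ, IsUnitaryMat (k t)) (hu : ∀ t : ℝ, IsUpperPos (u t))
    (hfac : ∀ t : ℝ, NormedSpace.exp ((t : ℂ) • Polynomial.aeval X p) = k t * u t) :
    ∀ (t : ℝ) (i j : Fin n),
      HasDerivAt (fun s : ℝ => ((k s)ᴴ * X * k s) i j)
        ((((k t)ᴴ * X * k t) * iwasawaProj (Polynomial.aeval ((k t)ᴴ * X * k t) p)
          - iwasawaProj (Polynomial.aeval ((k t)ᴴ * X * k t) p)
              * ((k t)ᴴ * X * k t)) i j) t := by
  classical
  intro t i0 j0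
  set P : Matrix (Fin n) (Fin n) ℂ := Polynomial.aeval X p with hP
  set K : Matrix (Fin n) (Fin n) ℂ := k t with hK
  set U : Matrix (Fin n) (Fin n) ℂ := u t with hU
  set K' : Matrix (Fin n) (Fin n) ℂ := Matrix.of fun i j => deriv (fun s => k s i j) t with hK'def
  set U' : Matrix (Fin n) (Fin n) ℂ := Matrix.of fun i j => deriv (fun s => u s i j) t with hU'def
  have hKd : HasMDerivAt k K' t := fun i j => ((hdk i j) t).hasDerivAt
  have hUd : HasMDerivAt u U' t := fun i j => ((hdu i j) t).hasDerivAt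
  have hKunit : Kᴴ * K = 1 := hk t
  have hKunit' : K * Kᴴ = 1 := mul_eq_one_comm.mp hKunit
  -- derivative of the exponential, transported to k·u via hfac
  have hexp : HasMDerivAt (fun s => k s * u s) (P * (K * U)) t := by
    have h1 := hasMDerivAt_exp P t
    rw [hfac t] at h1
    exact h1.congr_fun (fun s => (hfac s).symm)
  have hKU : P * (K * U) = K' * U + K * U' := hexp.unique (hKd.mul hUd)
  -- U is invertible
  have hUtri : U.BlockTriangular id := fun i j h => (hu t).2 i j h
  have hdet : IsUnit U.det := by
    rw [Matrix.det_of_upperTriangular hUtri]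
    refine isUnit_iff_ne_zero.mpr (Finset.prod_ne_zero_iff.mpr fun i _ => ?_)
    have h := (hu t).1 i
    intro heq
    rw [hU] at heq
    rw [heq] at h
    simp at h
  have hUUi : U * U⁻¹ = 1 := Matrix.mul_nonsing_inv U hdet
  -- multiply by U⁻¹ on the right
  have hPK : P * K = K' + K * (U' * U⁻¹) := by
    have h := congrArg (fun M => M * U⁻¹) hKU
    simp only [Matrix.add_mul] at h
    rw [← Matrix.mul_assoc P K U] at h
    calc P * K = P * K * (U * U⁻¹) := by rw [hUUi, Matrix.mul_one]
      _ = K' * U * U⁻¹ + K * U' * U⁻¹ := by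
          rw [← Matrix.mul_assoc (P * K) U U⁻¹]; exact h
      _ = K' + K * (U' * U⁻¹) := by
          rw [Matrix.mul_assoc K' U U⁻¹, hUUi, Matrix.mul_one, Matrix.mul_assoc K U' U⁻¹]
  set A : Matrix (Fin n) (Fin n) ℂ := Kᴴ * K' with hAdef
  set T : Matrix (Fin n) (Fin n) ℂ := U' * U⁻¹ with hTdef
  -- the Iwasawa-type decomposition of p(Y)
  have hpy : Polynomial.aeval (Kᴴ * X * K) p = A + T := by
    rw [aeval_conj K X p hKunit hKunit', ← hP, Matrix.mul_assoc Kᴴ P K, hPK, Matrix.mul_add,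
      ← Matrix.mul_assoc Kᴴ K (U' * U⁻¹), hKunit, Matrix.one_mul]
  -- A is skew-Hermitian
  have hskew0 : K'ᴴ * K + Kᴴ * K' = 0 := by
    have hone : HasMDerivAt (fun _ : ℝ => (1 : Matrix (Fin n) (Fin n) ℂ)) 0 t :=
      HasMDerivAt.const 1 t
    have hconj : HasMDerivAt (fun s => (k s)ᴴ * k s) (K'ᴴ * K + Kᴴ * K') t :=
      (hKd.conjTranspose).mul hKd
    have := (hconj.congr_fun (fun s => (hk s).symm) : HasMDerivAt (fun _ : ℝ => (1 : Matrix (Fin n) (Fin n) ℂ)) (K'ᴴ * K + Kᴴ * K') t)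
    exact (this.unique hone)
  have hskewK : K'ᴴ * K = -(Kᴴ * K') := by
    have := hskew0
    linear_combination (norm := noncomm_ring) this
  have hskew : Aᴴ = -A := by
    rw [hAdef, Matrix.conjTranspose_mul, Matrix.conjTranspose_conjTranspose, hskewK]
  -- T is upper triangular with real diagonal
  have hU'tri : U'.BlockTriangular id := by
    intro i j hij
    have hzero : HasDerivAt (fun s => u s i j) 0 t := by
      have : (fun s => u s i j) = fun _ => 0 := funext fun s => (hu s).2 i j hij
      rw [this]; exact hasDerivAt_const t 0
    exact (hUd i j).unique hzero
  haveI : Invertible U := U.invertibleOfIsUnitDet hdet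
  have hUitri : (U⁻¹).BlockTriangular id := Matrix.blockTriangular_inv_of_blockTriangular hUtri
  have hTtri : ∀ i j : Fin n, j < i → T i j = 0 := fun i j hij =>
    (hU'tri.mul hUitri) (by simpa using hij)
  have hTdiag : ∀ i, (T i i).im = 0 := by
    intro i
    have hdiag : T i i = U' i i * (U⁻¹) i i :=
      mul_diag_of_triangular U' U⁻¹ (fun a b h => hU'tri (by simpa using h))
        (fun a b h => hUitri (by simpa using h)) i
    have hUire : (U i i).im = 0 := ((hu t).1 i).2
    have hUpos : 0 < (U i i).re := ((hu t).1 i).1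
    -- (U⁻¹) i i has zero imaginary part
    have hinv1 : U i i * (U⁻¹) i i = 1 := by
      have := mul_diag_of_triangular U U⁻¹ (fun a b h => hUtri (by simpa using h))
        (fun a b h => hUitri (by simpa using h)) i
      rw [hUUi] at this
      simpa using this.symm
    have hUiim : ((U⁻¹) i i).im = 0 := by
      have him := congrArg Complex.im hinv1
      rw [Complex.mul_im, hUire] at him
      simp at him
      rcases him with h | h
      · exact absurd h (ne_of_gt hUpos)
      · exact h
    -- U' i i has zero imaginary part
    have hU'im : (U' i i).im = 0 := by
      have h1 : HasDerivAt (fun s => (u s i i).im) ((U' i i).im) t := by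
        have := (Complex.imCLM.hasFDerivAt (x := u t i i)).comp_hasDerivAt t (hUd i i)
        simpa [Function.comp_def, Complex.imCLM_apply] using this
      have h2 : HasDerivAt (fun s => (u s i i).im) 0 t := by
        have : (fun s => (u s i i).im) = fun _ => 0 := funext fun s => ((hu s).1 i).2
        rw [this]; exact hasDerivAt_const t 0
      exact h1.unique h2
    rw [hdiag, Complex.mul_im, hU'im, hUiim]
    ring
  have hproj : iwasawaProj (Polynomial.aeval (Kᴴ * X * K) p) = A := by
    rw [hpy]; exact iwasawaProj_add_eq A T hskew hTtri hTdiag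
  -- derivative of Y(s) = k(s)ᴴ X k(s)
  have hYd : HasMDerivAt (fun s => (k s)ᴴ * X * k s)
      ((K'ᴴ * X + Kᴴ * 0) * K + Kᴴ * X * K') t :=
    ((hKd.conjTranspose).mul (HasMDerivAt.const X t)).mul hKd
  -- the key algebraic identity
  have hK'H : Kᴴ * K' * Kᴴ = -K'ᴴ := by
    calc Kᴴ * K' * Kᴴ = -(K'ᴴ * K) * Kᴴ := by rw [hskewK, neg_neg]
      _ = -(K'ᴴ * (K * Kᴴ)) := by noncomm_ring
      _ = -K'ᴴ := by rw [hKunit', Matrix.mul_one]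
  have hfinal : (K'ᴴ * X + Kᴴ * 0) * K + Kᴴ * X * K'
      = (Kᴴ * X * K) * A - A * (Kᴴ * X * K) := by
    have e1 : (Kᴴ * X * K) * A = Kᴴ * X * K' := by
      calc (Kᴴ * X * K) * A = Kᴴ * X * ((K * Kᴴ) * K') := by rw [hAdef]; noncomm_ring
        _ = Kᴴ * X * K' := by rw [hKunit', Matrix.one_mul]
    have e2 : A * (Kᴴ * X * K) = -(K'ᴴ * X * K) := by
      calc A * (Kᴴ * X * K) = (Kᴴ * K' * Kᴴ) * X * K := by rw [hAdef]; noncomm_ring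
        _ = -(K'ᴴ * X * K) := by rw [hK'H]; noncomm_ring
    rw [e1, e2, Matrix.mul_zero, add_zero, sub_neg_eq_add]
    abel
  have goalEq : (K'ᴴ * X + Kᴴ * 0) * K + Kᴴ * X * K'
      = (Kᴴ * X * K) * iwasawaProj (Polynomial.aeval (Kᴴ * X * K) p)
        - iwasawaProj (Polynomial.aeval (Kᴴ * X * K) p) * (Kᴴ * X * K) := by
    rw [hproj]; exact hfinal
  have := hYd i0 j0
  rwa [goalEq] at this
end

section
/- The Toda flow is isospectral: if X : ℝ → M_n(ℂ) is a differentiable curve satisfying X'(t) = X(t)·π(X(t)) − π(X(t))·X(t) for all t ∈ ℝ, then for every natural number m the function t ↦ trace(X(t)^m) is constant; consequently the characteristic polynomial of X(t) does not depend on t. -/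
open Matrix

section Aux
variable {n : ℕ}

lemma hasDerivAt_matMul_entry {A B : ℝ → Matrix (Fin n) (Fin n) ℂ}
    {A' B' : Matrix (Fin n) (Fin n) ℂ} {t : ℝ}
    (hA : ∀ i j, HasDerivAt (fun s => A s i j) (A' i j) t)
    (hB : ∀ i j, HasDerivAt (fun s => B s i j) (B' i j) t) (i j : Fin n) :
    HasDerivAt (fun s => (A s * B s) i j) ((A' * B t + A t * B') i j) t := by
  simp only [Matrix.mul_apply, Matrix.add_apply]
  rw [← Finset.sum_add_distrib]
  exact HasDerivAt.fun_sum fun k _ => (hA i k).mul (hB k j)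

lemma hasDerivAt_pow_entry (X : ℝ → Matrix (Fin n) (Fin n) ℂ)
    (P : Matrix (Fin n) (Fin n) ℂ) (t : ℝ)
    (hX : ∀ i j, HasDerivAt (fun s => X s i j) ((X t * P - P * X t) i j) t)
    (m : ℕ) : ∀ i j : Fin n,
    HasDerivAt (fun s => (X s ^ m) i j) ((X t ^ m * P - P * X t ^ m) i j) t := by
  induction m with
  | zero =>
    intro i j
    simp only [pow_zero, one_mul, mul_one, sub_self, Matrix.zero_apply]
    exact hasDerivAt_const t _
  | succ m ih =>
    intro i j
    have h := hasDerivAt_matMul_entry (A := fun s => X s ^ m) (B := X)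
      (A' := X t ^ m * P - P * X t ^ m) (B' := X t * P - P * X t) ih hX i j
    have e : (X t ^ m * P - P * X t ^ m) * X t + X t ^ m * (X t * P - P * X t)
        = X t ^ (m + 1) * P - P * X t ^ (m + 1) := by
      rw [pow_succ]; noncomm_ring
    rw [e] at h
    simpa only [pow_succ] using h

/-- Jacobi-type formula: derivative of determinant along a curve. -/
lemma hasDerivAt_det_curve (M : ℝ → Matrix (Fin n) (Fin n) ℂ)
    (M' : Matrix (Fin n) (Fin n) ℂ) (t : ℝ)
    (h : ∀ i j, HasDerivAt (fun s => M s i j) (M' i j) t) :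
    HasDerivAt (fun s => (M s).det)
      (∑ i, ((M t).updateCol i fun r => M' r i).det) t := by
  have key : HasDerivAt (fun s => (M s).det)
      (∑ σ : Equiv.Perm (Fin n), (Equiv.Perm.sign σ : ℂ) *
        ∑ i, (∏ j ∈ Finset.univ.erase i, M t (σ j) j) • M' (σ i) i) t := by
    simp only [Matrix.det_apply']
    exact HasDerivAt.fun_sum fun σ _ =>
      (HasDerivAt.fun_finsetProd fun i _ => h (σ i) i).const_mul _
  convert key using 1
  have hupd : ∀ (b : Fin n → ℂ) (i : Fin n), ((M t).updateCol i b).det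
      = ∑ σ : Equiv.Perm (Fin n), (Equiv.Perm.sign σ : ℂ) *
          (b (σ i) * ∏ j ∈ Finset.univ.erase i, M t (σ j) j) := by
    intro b i
    rw [Matrix.det_apply']
    refine Finset.sum_congr rfl fun σ _ => ?_
    congr 1
    rw [← Finset.mul_prod_erase Finset.univ _ (Finset.mem_univ i)]
    congr 1
    · simp [Matrix.updateCol_apply]
    · exact Finset.prod_congr rfl fun j hj => by
        simp [Matrix.updateCol_apply, Finset.ne_of_mem_erase hj]
  calc ∑ i, ((M t).updateCol i fun r => M' r i).det
      = ∑ i, ∑ σ : Equiv.Perm (Fin n), (Equiv.Perm.sign σ : ℂ) *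
          (M' (σ i) i * ∏ j ∈ Finset.univ.erase i, M t (σ j) j) := by
        simp_rw [hupd]
    _ = ∑ σ : Equiv.Perm (Fin n), ∑ i, (Equiv.Perm.sign σ : ℂ) *
          (M' (σ i) i * ∏ j ∈ Finset.univ.erase i, M t (σ j) j) := Finset.sum_comm
    _ = _ := by
        refine Finset.sum_congr rfl fun σ _ => ?_
        rw [Finset.mul_sum]
        refine Finset.sum_congr rfl fun i _ => ?_
        rw [smul_eq_mul]; ring

/-- The sum of determinants with columns updated by a commutator vanishes. -/
lemma sum_det_updateColumn_commutator (M B : Matrix (Fin n) (Fin n) ℂ) :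
    ∑ i, (M.updateCol i fun r => (M * B - B * M) r i).det = 0 := by
  set N := M * B - B * M with hN
  have h1 : ∀ i : Fin n, (M.updateCol i fun r => N r i).det
      = (M.adjugate * N) i i := by
    intro i
    rw [← Matrix.cramer_apply, Matrix.cramer_eq_adjugate_mulVec]
    simp [Matrix.mulVec, Matrix.mul_apply, dotProduct]
  have h2 : ∑ i, (M.updateCol i fun r => N r i).det = (M.adjugate * N).trace := by
    simp [h1, Matrix.trace]
  rw [h2, hN, Matrix.mul_sub, Matrix.trace_sub, ← Matrix.mul_assoc, ← Matrix.mul_assoc,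
    Matrix.adjugate_mul]
  rw [Matrix.trace_mul_comm (M.adjugate * B) M, ← Matrix.mul_assoc, Matrix.mul_adjugate]
  ring

lemma eval_charpoly_eq (A : Matrix (Fin n) (Fin n) ℂ) (z : ℂ) :
    A.charpoly.eval z = (z • (1 : Matrix (Fin n) (Fin n) ℂ) - A).det := by
  rw [Matrix.charpoly, ← Polynomial.coe_evalRingHom, RingHom.map_det]
  congr 1
  ext i j
  by_cases hij : i = j <;>
    simp [hij, Matrix.charmatrix_apply, Matrix.smul_apply, Matrix.one_apply,
      Matrix.sub_apply, Matrix.diagonal_apply, Matrix.map_apply]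

end Aux

/-- The Toda flow is isospectral: along a solution of `X' = X·π(X) − π(X)·X`, every
power trace `trace(X(t)^m)` is constant, and the characteristic polynomial of `X(t)`
does not depend on `t`. -/
theorem stmt14 (n : ℕ) (hn : 0 < n) (X : ℝ → Matrix (Fin n) (Fin n) ℂ)
    (hX : ∀ (t : ℝ) (i j : Fin n),
      HasDerivAt (fun s : ℝ => X s i j)
        ((X t * iwasawaProj (X t) - iwasawaProj (X t) * X t) i j) t) :
    (∀ (m : ℕ) (t : ℝ), Matrix.trace (X t ^ m) = Matrix.trace (X 0 ^ m)) ∧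
    ∀ t : ℝ, (X t).charpoly = (X 0).charpoly := by
  constructor
  · intro m t
    have hd : ∀ u : ℝ, HasDerivAt (fun s => (X s ^ m).trace) 0 u := by
      intro u
      set P := iwasawaProj (X u) with hP
      have h := hasDerivAt_pow_entry X P u (hX u) m
      have htr : HasDerivAt (fun s => (X s ^ m).trace)
          ((X u ^ m * P - P * X u ^ m).trace) u := by
        simp only [Matrix.trace, Matrix.diag]
        exact HasDerivAt.fun_sum fun i _ => h i i
      have e : (X u ^ m * P - P * X u ^ m).trace = 0 := by
        rw [Matrix.trace_sub, Matrix.trace_mul_comm]; exact sub_self _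
      rwa [e] at htr
    exact is_const_of_deriv_eq_zero (fun u => (hd u).differentiableAt)
      (fun u => (hd u).deriv) t 0
  · intro t
    have detConst : ∀ z : ℂ,
        (z • (1 : Matrix (Fin n) (Fin n) ℂ) - X t).det
          = (z • (1 : Matrix (Fin n) (Fin n) ℂ) - X 0).det := by
      intro z
      set M : ℝ → Matrix (Fin n) (Fin n) ℂ :=
        fun s => z • (1 : Matrix (Fin n) (Fin n) ℂ) - X s with hM
      have hd : ∀ u : ℝ, HasDerivAt (fun s => (M s).det) 0 u := by
        intro u
        set P := iwasawaProj (X u) with hP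
        have hMd : ∀ i j, HasDerivAt (fun s => M s i j) ((M u * P - P * M u) i j) u := by
          intro i j
          have e : M u * P - P * M u = -(X u * P - P * X u) := by
            simp only [hM, sub_mul, mul_sub, smul_mul_assoc, mul_smul_comm, one_mul, mul_one]
            abel
          rw [e]
          have h0 := (hX u i j).const_sub ((z • (1 : Matrix (Fin n) (Fin n) ℂ)) i j)
          simpa [hM, Matrix.sub_apply, Matrix.neg_apply, neg_sub] using h0
        have hdet := hasDerivAt_det_curve M (M u * P - P * M u) u hMd
        rwa [sum_det_updateColumn_commutator (M u) P] at hdet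
      exact is_const_of_deriv_eq_zero (fun u => (hd u).differentiableAt)
        (fun u => (hd u).deriv) t 0
    refine Polynomial.funext fun z => ?_
    rw [eval_charpoly_eq, eval_charpoly_eq, detConst]
end

section
/- Phase factorization of the Toda trajectory: let Λ be a diagonal n×n complex matrix, Y a strictly lower triangular n×n complex matrix, and k₀ a unitary matrix admitting a factorization k₀ = l₀·u₀ with l₀ ∈ L and u₀ ∈ U; set X := k₀⁻¹·(Λ+Y)·k₀. Then for every t ∈ ℝ: (a) there exist l(t) ∈ L and u(t) ∈ U such that exp(−t·i·ImΛ)·exp(t·(Λ+Y))·k₀ = l(t)·u(t); (b) writing l(t) = q(t)·r(t) with q(t) unitary and r(t) ∈ U, the matrix Q(t) := k₀⁻¹·exp(t·i·ImΛ)·q(t) is unitary, R(t) := r(t)·u(t) lies in U, exp(t·X) = Q(t)·R(t), and Q(t)⁻¹·X·Q(t) = q(t)⁻¹·(Λ + exp(−t·i·ImΛ)·Y·exp(t·i·ImΛ))·q(t). -/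
open Matrix

lemma lowT_mul {n : ℕ} {A B : Matrix (Fin n) (Fin n) ℂ}
    (hA : ∀ i j : Fin n, i < j → A i j = 0) (hB : ∀ i j : Fin n, i < j → B i j = 0) :
    (∀ i j : Fin n, i < j → (A * B) i j = 0) ∧ (∀ i, (A * B) i i = A i i * B i i) := by
  constructor
  · intro i j hij
    rw [Matrix.mul_apply]
    apply Finset.sum_eq_zero
    intro x _
    rcases lt_or_ge i x with h | h
    · rw [hA i x h, zero_mul]
    · rw [hB x j (h.trans_lt hij), mul_zero]
  · intro i
    rw [Matrix.mul_apply]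
    apply Finset.sum_eq_single i
    · intro x _ hx
      rcases lt_or_gt_of_ne hx with h | h
      · rw [hB x i h, mul_zero]
      · rw [hA i x h, zero_mul]
    · intro h; exact absurd (Finset.mem_univ i) h

lemma lowT_pow {n : ℕ} {A : Matrix (Fin n) (Fin n) ℂ}
    (hA : ∀ i j : Fin n, i < j → A i j = 0) (k : ℕ) :
    (∀ i j : Fin n, i < j → (A ^ k) i j = 0) ∧ (∀ i, (A ^ k) i i = A i i ^ k) := by
  induction k with
  | zero =>
    simp only [pow_zero]
    exact ⟨fun i j hij => Matrix.one_apply_ne hij.ne, fun i => Matrix.one_apply_eq i⟩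
  | succ k ih =>
    rw [pow_succ]
    obtain ⟨h1, h2⟩ := lowT_mul ih.1 hA
    exact ⟨h1, fun i => by rw [h2 i, ih.2 i, pow_succ]⟩

lemma exp_lowT {n : ℕ} {A : Matrix (Fin n) (Fin n) ℂ}
    (hA : ∀ i j : Fin n, i < j → A i j = 0) :
    (∀ i j : Fin n, i < j → NormedSpace.exp A i j = 0) ∧
      (∀ i, NormedSpace.exp A i i = Complex.exp (A i i)) := by
  have hsum : HasSum (fun k : ℕ => ((Nat.factorial k : ℂ)⁻¹) • A ^ k) (NormedSpace.exp A) := by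
    letI : SeminormedRing (Matrix (Fin n) (Fin n) ℂ) := Matrix.linftyOpSemiNormedRing
    letI : NormedRing (Matrix (Fin n) (Fin n) ℂ) := Matrix.linftyOpNormedRing
    letI : NormedAlgebra ℂ (Matrix (Fin n) (Fin n) ℂ) := Matrix.linftyOpNormedAlgebra
    exact NormedSpace.exp_series_hasSum_exp' (𝕂 := ℂ) A
  have hentry : ∀ i j : Fin n,
      HasSum (fun k : ℕ => ((Nat.factorial k : ℂ)⁻¹) * (A ^ k) i j) (NormedSpace.exp A i j) := by
    intro i j
    have := hsum.map (AddMonoidHom.mk' (fun M : Matrix (Fin n) (Fin n) ℂ => M i j)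
      (fun M N => rfl)) (continuous_id.matrix_elem i j)
    exact this
  constructor
  · intro i j hij
    have h0 : HasSum (fun k : ℕ => (0 : ℂ)) (NormedSpace.exp A i j) := by
      have := hentry i j
      simpa [(lowT_pow hA _).1 i j hij] using this
    simpa using h0.tsum_eq.symm.trans tsum_zero
  · intro i
    have h1 : HasSum (fun k : ℕ => ((Nat.factorial k : ℂ)⁻¹) • (A i i) ^ k)
        (NormedSpace.exp A i i) := by
      have h := hentry i
      simp only [smul_eq_mul]
      simpa only [(lowT_pow hA _).2 i] using h i
    have h2 : HasSum (fun k : ℕ => ((Nat.factorial k : ℂ)⁻¹) • (A i i) ^ k)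
        (Complex.exp (A i i)) := by
      rw [Complex.exp_eq_exp_ℂ]
      exact NormedSpace.exp_series_hasSum_exp' (𝕂 := ℂ) (A i i)
    exact h1.unique h2

lemma upperPos_mul {n : ℕ} {r u : Matrix (Fin n) (Fin n) ℂ}
    (hr : IsUpperPos r) (hu : IsUpperPos u) : IsUpperPos (r * u) := by
  constructor
  · intro i
    have hdiag : (r * u) i i = r i i * u i i := by
      rw [Matrix.mul_apply]
      apply Finset.sum_eq_single i
      · intro x _ hx
        rcases lt_or_gt_of_ne hx with h | h
        · rw [hr.2 i x h, zero_mul]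
        · rw [hu.2 x i h, mul_zero]
      · intro h; exact absurd (Finset.mem_univ i) h
    obtain ⟨h1, h2⟩ := hr.1 i
    obtain ⟨h3, h4⟩ := hu.1 i
    rw [hdiag]
    constructor
    · simp only [Complex.mul_re, h2, h4, mul_zero, zero_mul, sub_zero]
      exact mul_pos h1 h3
    · simp [Complex.mul_im, h2, h4]
  · intro i j hji
    rw [Matrix.mul_apply]
    apply Finset.sum_eq_zero
    intro x _
    rcases lt_or_ge x i with h | h
    · rw [hr.2 i x h, zero_mul]
    · rw [hu.2 x j (hji.trans_le h), mul_zero]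

/-- Phase factorization of the Toda trajectory: with `X = k₀⁻¹·(Λ+Y)·k₀`,
`k₀ = l₀·u₀`, for each `t` the matrix `exp(−t·i·ImΛ)·exp(t·(Λ+Y))·k₀` has an `LU`
factorization `l·u`; and for any such factorization and any QR split `l = q·r`,
`Q = k₀⁻¹·exp(t·i·ImΛ)·q` is unitary, `R = r·u ∈ U`, `exp(t·X) = Q·R`, and
`Q⁻¹·X·Q = q⁻¹·(Λ + exp(−t·i·ImΛ)·Y·exp(t·i·ImΛ))·q`. -/
theorem stmt15 (n : ℕ) (hn : 0 < n) (d : Fin n → ℂ)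
    (Λ ImΛ Y X k₀ l₀ u₀ : Matrix (Fin n) (Fin n) ℂ)
    (hΛ : Λ = Matrix.diagonal d)
    (hIm : ImΛ = Matrix.diagonal fun j => ((d j).im : ℂ))
    (hY : IsStrictLower Y)
    (hk₀ : IsUnitaryMat k₀) (hl₀ : IsLowerUni l₀) (hu₀ : IsUpperPos u₀)
    (hfac : k₀ = l₀ * u₀)
    (hX : X = k₀⁻¹ * (Λ + Y) * k₀) (t : ℝ) :
    (∃ l u : Matrix (Fin n) (Fin n) ℂ, IsLowerUni l ∧ IsUpperPos u ∧
        NormedSpace.exp ((-(t : ℂ) * Complex.I) • ImΛ)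
            * NormedSpace.exp ((t : ℂ) • (Λ + Y)) * k₀ = l * u) ∧
    (∀ l u q r : Matrix (Fin n) (Fin n) ℂ,
      IsLowerUni l → IsUpperPos u →
      NormedSpace.exp ((-(t : ℂ) * Complex.I) • ImΛ)
          * NormedSpace.exp ((t : ℂ) • (Λ + Y)) * k₀ = l * u →
      IsUnitaryMat q → IsUpperPos r → l = q * r →
      IsUnitaryMat (k₀⁻¹ * NormedSpace.exp (((t : ℂ) * Complex.I) • ImΛ) * q) ∧
      IsUpperPos (r * u) ∧
      NormedSpace.exp ((t : ℂ) • X) =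
        (k₀⁻¹ * NormedSpace.exp (((t : ℂ) * Complex.I) • ImΛ) * q) * (r * u) ∧
      (k₀⁻¹ * NormedSpace.exp (((t : ℂ) * Complex.I) • ImΛ) * q)⁻¹ * X
          * (k₀⁻¹ * NormedSpace.exp (((t : ℂ) * Complex.I) • ImΛ) * q) =
        q⁻¹ * (Λ + NormedSpace.exp ((-(t : ℂ) * Complex.I) • ImΛ) * Y
            * NormedSpace.exp (((t : ℂ) * Complex.I) • ImΛ)) * q) := by
  
  classical
  have hexpD : ∀ c : ℂ, NormedSpace.exp (c • ImΛ)
      = Matrix.diagonal (fun j => Complex.exp (c * ((d j).im : ℂ))) := by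
    intro c
    have harg : (NormedSpace.exp (c • fun j : Fin n => ((d j).im : ℂ)))
        = fun j => Complex.exp (c * ((d j).im : ℂ)) := by
      rw [Pi.exp_def]
      funext j
      rw [Pi.smul_apply, smul_eq_mul, Complex.exp_eq_exp_ℂ]
    rw [hIm, ← Matrix.diagonal_smul, Matrix.exp_diagonal, harg]
  set Dm := NormedSpace.exp ((-(t : ℂ) * Complex.I) • ImΛ) with hDmdef
  set Dp := NormedSpace.exp (((t : ℂ) * Complex.I) • ImΛ) with hDpdef
  set E := NormedSpace.exp ((t : ℂ) • (Λ + Y)) with hEdef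
  have hDm : Dm = Matrix.diagonal (fun j => Complex.exp (-(t : ℂ) * Complex.I * ((d j).im : ℂ))) :=
    hexpD _
  have hDp : Dp = Matrix.diagonal (fun j => Complex.exp ((t : ℂ) * Complex.I * ((d j).im : ℂ))) :=
    hexpD _
  have hDmDp : Dm * Dp = 1 := by
    rw [hDm, hDp, Matrix.diagonal_mul_diagonal]
    have : (fun i => Complex.exp (-(t : ℂ) * Complex.I * ((d i).im : ℂ))
        * Complex.exp ((t : ℂ) * Complex.I * ((d i).im : ℂ))) = fun _ : Fin n => (1 : ℂ) := by
      funext j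
      rw [← Complex.exp_add]
      rw [show -(t : ℂ) * Complex.I * ((d j).im : ℂ) + (t : ℂ) * Complex.I * ((d j).im : ℂ)
        = 0 by ring, Complex.exp_zero]
    rw [this, Matrix.diagonal_one]
  have hDpDm : Dp * Dm = 1 := by
    rw [hDp, hDm, Matrix.diagonal_mul_diagonal]
    have : (fun i => Complex.exp ((t : ℂ) * Complex.I * ((d i).im : ℂ))
        * Complex.exp (-(t : ℂ) * Complex.I * ((d i).im : ℂ))) = fun _ : Fin n => (1 : ℂ) := by
      funext j
      rw [← Complex.exp_add]
      rw [show (t : ℂ) * Complex.I * ((d j).im : ℂ) + -(t : ℂ) * Complex.I * ((d j).im : ℂ)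
        = 0 by ring, Complex.exp_zero]
    rw [this, Matrix.diagonal_one]
  -- the lower-triangular structure of E
  have hLY : ∀ i j : Fin n, i < j → ((t : ℂ) • (Λ + Y)) i j = 0 := by
    intro i j hij
    rw [Matrix.smul_apply, Matrix.add_apply, hΛ, Matrix.diagonal_apply_ne _ hij.ne,
      hY i j hij.le, add_zero, smul_zero]
  obtain ⟨hE0, hEd⟩ := exp_lowT hLY
  rw [← hEdef] at hE0 hEd
  have hEdiag : ∀ i, E i i = Complex.exp ((t : ℂ) * d i) := by
    intro i
    rw [hEd i, Matrix.smul_apply, Matrix.add_apply, hΛ, Matrix.diagonal_apply_eq,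
      hY i i le_rfl, add_zero, smul_eq_mul]
  have hDm0 : ∀ i j : Fin n, i < j → Dm i j = 0 := by
    intro i j hij
    rw [hDm]
    exact Matrix.diagonal_apply_ne _ hij.ne
  have hDmE := lowT_mul hDm0 hE0
  have hT := lowT_mul hDmE.1 hl₀.2
  set δ : Fin n → ℝ := fun i => Real.exp (t * (d i).re) with hδdef
  have hδpos : ∀ i, 0 < δ i := fun i => Real.exp_pos _
  have hδne : ∀ i, ((δ i : ℂ)) ≠ 0 := fun i => by
    exact_mod_cast Complex.ofReal_ne_zero.mpr (hδpos i).ne'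
  have hTdiag : ∀ i, (Dm * E * l₀) i i = (δ i : ℂ) := by
    intro i
    rw [hT.2 i, hDmE.2 i, hl₀.1 i, mul_one, hDm, Matrix.diagonal_apply_eq, hEdiag i,
      ← Complex.exp_add, hδdef]
    rw [show ((Real.exp (t * (d i).re) : ℝ) : ℂ) = Complex.exp ((t * (d i).re : ℝ) : ℂ) from
      (Complex.ofReal_exp _)]
    congr 1
    apply Complex.ext <;>
      simp [Complex.mul_re, Complex.mul_im] <;> ring
  constructor
  · -- part (a)
    refine ⟨(Dm * E * l₀) * Matrix.diagonal (fun i => ((δ i : ℂ))⁻¹),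
      Matrix.diagonal (fun i => (δ i : ℂ)) * u₀, ⟨?_, ?_⟩, ⟨?_, ?_⟩, ?_⟩
    · intro i
      rw [Matrix.mul_diagonal, hTdiag i, mul_inv_cancel₀ (hδne i)]
    · intro i j hij
      rw [Matrix.mul_diagonal, hT.1 i j hij, zero_mul]
    · intro i
      rw [Matrix.diagonal_mul, ]
      obtain ⟨h1, h2⟩ := hu₀.1 i
      constructor
      · simp only [Complex.mul_re, Complex.ofReal_re, Complex.ofReal_im, h2, mul_zero,
          zero_mul, sub_zero]
        exact mul_pos (hδpos i) h1
      · simp [Complex.mul_im, h2]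
    · intro i j hji
      rw [Matrix.diagonal_mul, hu₀.2 i j hji, mul_zero]
    · have hdd : Matrix.diagonal (fun i => ((δ i : ℂ))⁻¹) * Matrix.diagonal (fun i => (δ i : ℂ))
          = 1 := by
        rw [Matrix.diagonal_mul_diagonal]
        have : (fun i => ((δ i : ℂ))⁻¹ * (δ i : ℂ)) = fun _ : Fin n => (1 : ℂ) :=
          funext fun i => inv_mul_cancel₀ (hδne i)
        rw [this, Matrix.diagonal_one]
      calc Dm * E * k₀ = Dm * E * l₀ * u₀ := by
            rw [hfac]; simp only [Matrix.mul_assoc]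
        _ = Dm * E * l₀ * ((Matrix.diagonal (fun i => ((δ i : ℂ))⁻¹)
              * Matrix.diagonal (fun i => (δ i : ℂ))) * u₀) := by rw [hdd, Matrix.one_mul]
        _ = Dm * E * l₀ * Matrix.diagonal (fun i => ((δ i : ℂ))⁻¹)
              * (Matrix.diagonal (fun i => (δ i : ℂ)) * u₀) := by
            simp only [Matrix.mul_assoc]
  · -- part (b)
    intro l u q r hl hu hlu hq hr hqr
    have hk₀' : k₀ * k₀ᴴ = 1 := mul_eq_one_comm.mp hk₀
    have hkinv : k₀⁻¹ = k₀ᴴ := Matrix.inv_eq_left_inv hk₀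
    have hqinv : q⁻¹ = qᴴ := Matrix.inv_eq_left_inv hq
    have hDpH : Dpᴴ = Dm := by
      rw [hDp, hDm, Matrix.diagonal_conjTranspose]
      have hst : star (fun j => Complex.exp ((t : ℂ) * Complex.I * ((d j).im : ℂ)))
          = fun j : Fin n => Complex.exp (-(t : ℂ) * Complex.I * ((d j).im : ℂ)) := by
        funext j
        simp only [Pi.star_apply, RCLike.star_def, ← Complex.exp_conj, _root_.map_mul,
          Complex.conj_I, Complex.conj_ofReal]
        congr 1
        ring
      rw [hst]
    have ck : ∀ M : Matrix (Fin n) (Fin n) ℂ, k₀ * (k₀ᴴ * M) = M := fun M => by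
      rw [← Matrix.mul_assoc, hk₀', Matrix.one_mul]
    have cdm : ∀ M : Matrix (Fin n) (Fin n) ℂ, Dm * (Dp * M) = M := fun M => by
      rw [← Matrix.mul_assoc, hDmDp, Matrix.one_mul]
    have cdp : ∀ M : Matrix (Fin n) (Fin n) ℂ, Dp * (Dm * M) = M := fun M => by
      rw [← Matrix.mul_assoc, hDpDm, Matrix.one_mul]
    have hQu : (k₀⁻¹ * Dp * q)ᴴ * (k₀⁻¹ * Dp * q) = 1 := by
      rw [hkinv]
      simp only [Matrix.conjTranspose_mul, Matrix.conjTranspose_conjTranspose, hDpH,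
        Matrix.mul_assoc]
      rw [ck, ← Matrix.mul_assoc Dm Dp q, hDmDp, Matrix.one_mul, hq]
    refine ⟨hQu, upperPos_mul hr hu, ?_, ?_⟩
    · -- exp(tX) = Q R
      have hkUnit : IsUnit k₀ := by
        have := invertibleOfLeftInverse _ _ hk₀
        exact isUnit_of_invertible k₀
      have hsm : (t : ℂ) • X = k₀⁻¹ * ((t : ℂ) • (Λ + Y)) * k₀ := by
        rw [hX, Matrix.mul_smul, Matrix.smul_mul]
      rw [hsm, Matrix.exp_conj' k₀ _ hkUnit, ← hEdef]
      calc k₀⁻¹ * E * k₀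
          = k₀⁻¹ * (Dp * (Dm * (E * k₀))) := by
            rw [cdp]; rw [Matrix.mul_assoc]
        _ = k₀⁻¹ * Dp * (Dm * E * k₀) := by simp only [Matrix.mul_assoc]
        _ = k₀⁻¹ * Dp * (l * u) := by rw [hlu]
        _ = k₀⁻¹ * Dp * q * (r * u) := by
            rw [hqr]; simp only [Matrix.mul_assoc]
    · -- conjugation identity
      have hQinv : (k₀⁻¹ * Dp * q)⁻¹ = (k₀⁻¹ * Dp * q)ᴴ := Matrix.inv_eq_left_inv hQu
      have hcommΛ : Dm * Λ = Λ * Dm := by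
        rw [hDm, hΛ, Matrix.diagonal_mul_diagonal, Matrix.diagonal_mul_diagonal]
        exact congrArg Matrix.diagonal (funext fun j => mul_comm _ _)
      have key : Dm * ((Λ + Y) * Dp) = Λ + Dm * Y * Dp := by
        rw [← Matrix.mul_assoc, Matrix.mul_add, Matrix.add_mul, hcommΛ,
          Matrix.mul_assoc Λ, hDmDp, Matrix.mul_one, Matrix.mul_assoc]
      rw [hQinv, hX, hkinv, hqinv]
      simp only [Matrix.conjTranspose_mul, Matrix.conjTranspose_conjTranspose, hDpH,
        Matrix.mul_assoc]
      rw [ck, ck]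
      rw [show (Λ + Y) * (Dp * q) = ((Λ + Y) * Dp) * q by simp only [Matrix.mul_assoc],
        ← Matrix.mul_assoc Dm, key]
      simp only [Matrix.mul_assoc]
end

section
/- The Toda vector field is tangent to the quaternionic special linear algebra: let n = 2m and let X be an n×n complex matrix satisfying, for all 1 ≤ a, b ≤ m, the relations X_{2a,2b} = conj(X_{2a−1,2b−1}) and X_{2a,2b−1} = −conj(X_{2a−1,2b}) (i.e., X lies in gl_m(ℍ) embedded in M_{2m}(ℂ) by 2×2 blocks). Then π(X) satisfies the same relations, and consequently the Toda vector X·π(X) − π(X)·X also satisfies the same relations. -/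
open Matrix

/-- The defining relations of `gl_m(ℍ)` embedded in `M_{2m}(ℂ)` by `2 × 2` blocks:
`X_{2a,2b} = conj X_{2a−1,2b−1}` and `X_{2a,2b−1} = −conj X_{2a−1,2b}`
(in 1-based indexing). -/
def IsQuaternionic {m : ℕ} (X : Matrix (Fin (2 * m)) (Fin (2 * m)) ℂ) : Prop :=
  ∀ a b : Fin m,
    X ⟨2 * a + 1, by have := a.isLt; omega⟩ ⟨2 * b + 1, by have := b.isLt; omega⟩ =
      starRingEnd ℂ (X ⟨2 * a, by have := a.isLt; omega⟩ ⟨2 * b, by have := b.isLt; omega⟩) ∧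
    X ⟨2 * a + 1, by have := a.isLt; omega⟩ ⟨2 * b, by have := b.isLt; omega⟩ =
      - starRingEnd ℂ (X ⟨2 * a, by have := a.isLt; omega⟩ ⟨2 * b + 1, by have := b.isLt; omega⟩)

lemma sum_split {M : Type*} [AddCommMonoid M] (m : ℕ) (f : Fin (2*m) → M) :
    ∑ k, f k = ∑ c : Fin m, (f ⟨2*c, by omega⟩ + f ⟨2*c+1, by omega⟩) := by
  let e : Fin m × Fin 2 ≃ Fin (2*m) := (finProdFinEquiv).trans (finCongr (by ring))
  rw [← Fintype.sum_equiv e (fun p => f (e p)) f (fun p => rfl)]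
  rw [Fintype.sum_prod_type]
  refine Finset.sum_congr rfl fun c _ => ?_
  rw [Fin.sum_univ_two]
  congr 1 <;> congr 1 <;>
    exact Fin.ext (by simp only [e, finProdFinEquiv, finCongr, Equiv.trans_apply,
      Equiv.coe_fn_mk, Fin.cast_mk, Fin.val_zero, Fin.val_one]; omega)

lemma quat_sub {m : ℕ} {A B : Matrix (Fin (2*m)) (Fin (2*m)) ℂ}
    (hA : IsQuaternionic A) (hB : IsQuaternionic B) : IsQuaternionic (A - B) := by
  intro a b
  obtain ⟨hA1, hA2⟩ := hA a b
  obtain ⟨hB1, hB2⟩ := hB a b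
  constructor <;> simp only [Matrix.sub_apply, hA1, hA2, hB1, hB2, map_sub] <;> ring

lemma quat_mul {m : ℕ} {A B : Matrix (Fin (2*m)) (Fin (2*m)) ℂ}
    (hA : IsQuaternionic A) (hB : IsQuaternionic B) : IsQuaternionic (A * B) := by
  intro a b
  constructor
  · simp only [Matrix.mul_apply]
    rw [sum_split, sum_split, map_sum]
    refine Finset.sum_congr rfl fun c _ => ?_
    obtain ⟨hA1, hA2⟩ := hA a c
    obtain ⟨hB1, hB2⟩ := hB c b
    rw [hA1, hA2, hB1, hB2]
    simp only [map_add, _root_.map_mul, map_neg, Complex.conj_conj]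
    ring
  · simp only [Matrix.mul_apply]
    rw [sum_split, sum_split, map_sum, ← Finset.sum_neg_distrib]
    refine Finset.sum_congr rfl fun c _ => ?_
    obtain ⟨hA1, hA2⟩ := hA a c
    obtain ⟨hB1, hB2⟩ := hB c b
    rw [hA1, hA2, hB1, hB2]
    simp only [map_add, _root_.map_mul, map_neg, Complex.conj_conj]
    ring

lemma quat_iwa {m : ℕ} {X : Matrix (Fin (2*m)) (Fin (2*m)) ℂ}
    (hX : IsQuaternionic X) : IsQuaternionic (iwasawaProj X) := by
  intro a b
  rcases lt_trichotomy (a : ℕ) (b : ℕ) with h | h | h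
  · obtain ⟨hba1, hba2⟩ := hX b a
    refine ⟨?_, ?_⟩ <;>
      simp only [iwasawaProj, Matrix.add_apply, Matrix.sub_apply, Matrix.conjTranspose_apply,
        lowerPart, Matrix.of_apply, Matrix.diagonal_apply, Fin.mk_lt_mk, Fin.mk.injEq,
        RCLike.star_def]
    · split_ifs <;> first | (exfalso; omega) | (rw [hba1]; simp)
    · split_ifs <;> first | (exfalso; omega) | (rw [hba2]; simp)
  · have : a = b := Fin.ext h
    subst this
    obtain ⟨haa1, haa2⟩ := hX a a
    refine ⟨?_, ?_⟩ <;>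
      simp only [iwasawaProj, Matrix.add_apply, Matrix.sub_apply, Matrix.conjTranspose_apply,
        lowerPart, Matrix.of_apply, Matrix.diagonal_apply, Fin.mk_lt_mk, Fin.mk.injEq,
        RCLike.star_def]
    · split_ifs <;> first
        | (exfalso; omega)
        | (rw [haa1]; simp [Complex.conj_im])
    · split_ifs <;> first | (exfalso; omega) | simp
  · obtain ⟨hab1, hab2⟩ := hX a b
    refine ⟨?_, ?_⟩ <;>
      simp only [iwasawaProj, Matrix.add_apply, Matrix.sub_apply, Matrix.conjTranspose_apply,
        lowerPart, Matrix.of_apply, Matrix.diagonal_apply, Fin.mk_lt_mk, Fin.mk.injEq,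
        RCLike.star_def]
    · split_ifs <;> first | (exfalso; omega) | (rw [hab1]; simp)
    · split_ifs <;> first | (exfalso; omega) | (rw [hab2]; simp)

/-- The Toda vector field is tangent to the quaternionic special linear algebra:
if `X` satisfies the quaternionic block relations then so do `π(X)` and the Toda
vector `X·π(X) − π(X)·X`. -/
theorem stmt18 (m : ℕ) (hm : 0 < m) (X : Matrix (Fin (2 * m)) (Fin (2 * m)) ℂ)
    (hX : IsQuaternionic X) :
    IsQuaternionic (iwasawaProj X) ∧
    IsQuaternionic (X * iwasawaProj X - iwasawaProj X * X) := by
  have hP := quat_iwa hX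
  exact ⟨hP, quat_sub (quat_mul hX hP) (quat_mul hP hX)⟩
end

section
/- The QR (Gram–Schmidt) factorization is compatible with the split complex orthogonal group: let S be the n×n antidiagonal permutation matrix (S_{ij} = 1 if i + j = n + 1 and S_{ij} = 0 otherwise), and let g be an n×n complex matrix with gᵀ·S·g = S and det g = 1. If g = k·u with k unitary and u ∈ U, then kᵀ·S·k = S and uᵀ·S·u = S (and det k = det u = 1). -/
open Matrix

lemma keyLemma {n : ℕ} (m : Matrix (Fin n) (Fin n) ℂ)
    (hm : mᴴ * m = 1)
    (ht : ∀ i j : Fin n, j < i → m i j = 0)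
    (hd : ∀ i, 0 < (m i i).re ∧ (m i i).im = 0) : m = 1 := by
  have hmE : ∀ a b : Fin n, (∑ t, (starRingEnd ℂ) (m t a) * m t b) = if a = b then 1 else 0 := by
    intro a b
    have := congrFun (congrFun hm a) b
    simpa [Matrix.mul_apply, Matrix.conjTranspose_apply, Matrix.one_apply] using this
  have key : ∀ N : ℕ, ∀ i : Fin n, (i : ℕ) < N → ∀ j, m j i = if j = i then 1 else 0 := by
    intro N
    induction N with
    | zero => intro i hi; omega
    | succ N IHN =>
      intro i hiN
      have IH : ∀ j : Fin n, j < i → ∀ t, m t j = if t = j then 1 else 0 := by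
        intro j hj
        exact IHN j (by omega)
      have hzero : ∀ j, j < i → m j i = 0 := by
        intro j hj
        have h0 := hmE j i
        rw [if_neg (Fin.ne_of_lt hj)] at h0
        calc m j i = ∑ t, (starRingEnd ℂ) (m t j) * m t i := by
              simp [IH j hj, apply_ite (starRingEnd ℂ), ite_mul]
          _ = 0 := h0
      have h1 := hmE i i
      rw [if_pos rfl] at h1
      have h2 : (starRingEnd ℂ) (m i i) * m i i = 1 := by
        rw [← h1, Finset.sum_eq_single i]
        · intro t _ hti
          rcases lt_or_gt_of_ne hti with h | h
          · rw [hzero t h]; ring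
          · rw [ht t i h]; ring
        · simp
      have hre : m i i = ((m i i).re : ℂ) := by
        apply Complex.ext <;> simp [(hd i).2]
      have hx : ((m i i).re : ℂ) * ((m i i).re : ℂ) = 1 := by
        rw [hre] at h2; simpa using h2
      have hx2 : (m i i).re * (m i i).re = 1 := by exact_mod_cast hx
      have hdiag : m i i = 1 := by
        have : (m i i).re = 1 := by nlinarith [(hd i).1]
        rw [hre, this]; norm_num
      intro j
      rcases lt_trichotomy j i with h | h | h
      · rw [hzero j h, if_neg (Fin.ne_of_lt h)]
      · rw [h, if_pos rfl, hdiag]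
      · rw [ht j i h, if_neg (Fin.ne_of_gt h)]
  ext i j
  rw [key ((j : ℕ) + 1) j (Nat.lt_succ_self _) i, Matrix.one_apply]

theorem stmt19' (n : ℕ) (hn : 0 < n)
    (S g k u : Matrix (Fin n) (Fin n) ℂ)
    (hS : S = Matrix.of fun i j : Fin n => if (i : ℕ) + (j : ℕ) + 1 = n then (1 : ℂ) else 0)
    (hg : gᵀ * S * g = S) (hdet : g.det = 1)
    (hk : kᴴ * k = 1)
    (hu : (∀ i, 0 < (u i i).re ∧ (u i i).im = 0) ∧ ∀ i j : Fin n, j < i → u i j = 0)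
    (hfac : g = k * u) :
    kᵀ * S * k = S ∧ uᵀ * S * u = S ∧ k.det = 1 ∧ u.det = 1 := by
  have hS1 : ∀ i j : Fin n, S i j = if j = i.rev then 1 else 0 := by
    intro i j
    have hiff : ((i:ℕ) + (j:ℕ) + 1 = n) ↔ j = i.rev := by
      rw [Fin.ext_iff, Fin.val_rev]; omega
    rw [hS]; simp only [Matrix.of_apply, hiff]
  have hS2 : ∀ i j : Fin n, S i j = if i = j.rev then 1 else 0 := by
    intro i j
    have hiff : ((i:ℕ) + (j:ℕ) + 1 = n) ↔ i = j.rev := by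
      rw [Fin.ext_iff, Fin.val_rev]; omega
    rw [hS]; simp only [Matrix.of_apply, hiff]
  have hSmulL : ∀ (M : Matrix (Fin n) (Fin n) ℂ) (i j : Fin n), (S * M) i j = M i.rev j := by
    intro M i j
    rw [Matrix.mul_apply]
    rw [Finset.sum_eq_single i.rev]
    · rw [hS1, if_pos rfl, one_mul]
    · intro t _ h; rw [hS1, if_neg h, zero_mul]
    · simp
  have hSS : S * S = 1 := by
    ext i j
    rw [hSmulL, hS1, Fin.rev_rev, Matrix.one_apply]
    simp [eq_comm]
  have hSh : Sᴴ = S := by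
    ext i j
    rw [Matrix.conjTranspose_apply, hS1 j i, hS2 i j, apply_ite star, star_one, star_zero]
  -- invertibility of u
  have hud : u.det = ∏ i, u i i := Matrix.det_of_upperTriangular hu.2
  have hdiagC : ∀ i, u i i = ((u i i).re : ℂ) := fun i => by
    apply Complex.ext <;> simp [(hu.1 i).2]
  have hdet_u : u.det = ((∏ i, (u i i).re : ℝ) : ℂ) := by
    rw [hud]; push_cast; exact Finset.prod_congr rfl fun i _ => hdiagC i
  have hprodpos : 0 < ∏ i, (u i i).re := Finset.prod_pos fun i _ => (hu.1 i).1
  have hdetu_ne : u.det ≠ 0 := by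
    rw [hdet_u]
    exact_mod_cast ne_of_gt hprodpos
  have hunit : IsUnit u.det := isUnit_iff_ne_zero.mpr hdetu_ne
  haveI : Invertible u := u.invertibleOfIsUnitDet hunit
  set v := u⁻¹ with hvdef
  have huv : u * v = 1 := Matrix.mul_nonsing_inv u hunit
  have hvtri : ∀ i j : Fin n, j < i → v i j = 0 := by
    have := Matrix.blockTriangular_inv_of_blockTriangular hu.2
    exact fun i j h => this h
  have hvdiag : ∀ i, v i i = (u i i)⁻¹ := by
    intro i
    have h1 : (u * v) i i = 1 := by rw [huv, Matrix.one_apply_eq]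
    rw [Matrix.mul_apply, Finset.sum_eq_single i] at h1
    · exact eq_inv_of_mul_eq_one_right h1
    · intro t _ hti
      rcases lt_or_gt_of_ne hti with h | h
      · rw [hu.2 i t h, zero_mul]
      · rw [hvtri t i h, mul_zero]
    · simp
  -- T := kᵀ * S * k
  set T := kᵀ * S * k with hTdef
  have hk' : k * kᴴ = 1 := mul_eq_one_comm.mp hk
  have hT1 : uᵀ * T * u = S := by
    have h : uᵀ * T * u = gᵀ * S * g := by
      rw [hfac]
      simp only [hTdef, Matrix.transpose_mul, Matrix.mul_assoc]
    rw [h, hg]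
  have hvu_t : vᵀ * uᵀ = 1 := by rw [← Matrix.transpose_mul, huv, Matrix.transpose_one]
  have hT : T = vᵀ * S * v := by
    rw [← hT1]
    simp only [← Matrix.mul_assoc]
    rw [hvu_t, Matrix.one_mul, Matrix.mul_assoc _ u v, huv, Matrix.mul_one]
  -- M := S * T
  set M := S * T with hMdef
  set c := k.map (starRingEnd ℂ) with hcdef
  have hc1 : (kᵀ)ᴴ = c := by
    ext i j
    simp [Matrix.conjTranspose_apply, Matrix.transpose_apply, hcdef]
  have hc1' : (kᴴ)ᵀ = c := by
    ext i j
    simp [Matrix.conjTranspose_apply, Matrix.transpose_apply, hcdef]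
  have hc2 : c * kᵀ = 1 := by
    rw [← hc1', ← Matrix.transpose_mul, hk', Matrix.transpose_one]
  have hTh : Tᴴ = kᴴ * S * c := by
    rw [hTdef]
    simp only [Matrix.conjTranspose_mul, hSh, hc1]
    simp only [← Matrix.mul_assoc]
  have hTT : Tᴴ * T = 1 := by
    have h : Tᴴ * T = kᴴ * S * (c * kᵀ) * S * k := by
      rw [hTh, hTdef]; simp only [Matrix.mul_assoc]
    rw [h, hc2, Matrix.mul_one, Matrix.mul_assoc _ S S, hSS, Matrix.mul_one, hk]
  have hMuni : Mᴴ * M = 1 := by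
    have h : Mᴴ * M = Tᴴ * (Sᴴ * S) * T := by
      rw [hMdef, Matrix.conjTranspose_mul]; simp only [Matrix.mul_assoc]
    rw [h, hSh, hSS, Matrix.mul_one, hTT]
  have hMapp : ∀ i j, M i j = ∑ b, v b i.rev * v b.rev j := by
    intro i j
    rw [hMdef, hSmulL, hT, Matrix.mul_assoc, Matrix.mul_apply]
    refine Finset.sum_congr rfl fun b _ => ?_
    rw [Matrix.transpose_apply, hSmulL]
  have hrevlt : ∀ a b : Fin n, a < b.rev → b < a.rev := by
    intro a b h
    rw [Fin.lt_def, Fin.val_rev] at *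
    omega
  have hMtri : ∀ i j : Fin n, j < i → M i j = 0 := by
    intro i j hij
    rw [hMapp]
    refine Finset.sum_eq_zero fun b _ => ?_
    rcases lt_or_ge i.rev b with h | h
    · rw [hvtri b i.rev h, zero_mul]
    · have : j < b.rev := lt_of_lt_of_le hij (by
        rw [Fin.le_def, Fin.val_rev] at *
        omega)
      rw [hvtri b.rev j this, mul_zero]
  have hMdiag : ∀ i, M i i = v i.rev i.rev * v i i := by
    intro i
    rw [hMapp, Finset.sum_eq_single i.rev]
    · rw [Fin.rev_rev]
    · intro b _ hb
      rcases lt_or_gt_of_ne hb with h | h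
      · have : i < b.rev := hrevlt b i h
        rw [hvtri b.rev i this, mul_zero]
      · rw [hvtri b i.rev h, zero_mul]
    · simp
  have hMpos : ∀ i, 0 < (M i i).re ∧ (M i i).im = 0 := by
    intro i
    have h1 : M i i = (((u i.rev i.rev).re⁻¹ * (u i i).re⁻¹ : ℝ) : ℂ) := by
      conv_lhs => rw [hMdiag, hvdiag, hvdiag, hdiagC i, hdiagC i.rev]
      push_cast
      ring
    rw [h1]
    constructor
    · simp only [Complex.ofReal_re]
      exact mul_pos (inv_pos.mpr (hu.1 i.rev).1) (inv_pos.mpr (hu.1 i).1)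
    · simp
  have hM1 : M = 1 := keyLemma M hMuni hMtri hMpos
  have hTS : T = S := by
    have h : S * M = S * 1 := by rw [hM1]
    rwa [hMdef, ← Matrix.mul_assoc, hSS, Matrix.one_mul, Matrix.mul_one] at h
  have goal1 : kᵀ * S * k = S := by rw [← hTdef, hTS]
  have goal2 : uᵀ * S * u = S := by rw [hTS] at hT1; exact hT1
  -- determinants
  have hdS : S.det * S.det = 1 := by rw [← Matrix.det_mul, hSS, Matrix.det_one]
  have hdSne : S.det ≠ 0 := by
    intro h; rw [h, mul_zero] at hdS; exact zero_ne_one hdS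
  have hdu2 : u.det * u.det = 1 := by
    have h := congrArg Matrix.det goal2
    rw [Matrix.det_mul, Matrix.det_mul, Matrix.det_transpose] at h
    have h2 : u.det * u.det * S.det = 1 * S.det := by linear_combination h
    have h3 := mul_right_cancel₀ hdSne h2
    exact h3
  have hdetu : u.det = 1 := by
    rw [hdet_u] at hdu2 ⊢
    have : ((∏ i, (u i i).re) * (∏ i, (u i i).re) : ℝ) = 1 := by exact_mod_cast hdu2
    have hP : (∏ i, (u i i).re) = 1 := by nlinarith [hprodpos]
    rw [hP]; norm_num
  have hdetk : k.det = 1 := by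
    have h := congrArg Matrix.det hfac
    rw [hdet, Matrix.det_mul, hdetu, mul_one] at h
    exact h.symm
  exact ⟨goal1, goal2, hdetk, hdetu⟩


/-- QR is compatible with the split complex orthogonal group: if `gᵀ·S·g = S`,
`det g = 1` for the antidiagonal `S`, and `g = k·u` with `k` unitary and `u ∈ U`,
then `kᵀ·S·k = S`, `uᵀ·S·u = S`, and `det k = det u = 1`. -/
theorem stmt19 (n : ℕ) (hn : 0 < n)
    (S g k u : Matrix (Fin n) (Fin n) ℂ)
    (hS : S = Matrix.of fun i j : Fin n => if (i : ℕ) + (j : ℕ) + 1 = n then (1 : ℂ) else 0)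
    (hg : gᵀ * S * g = S) (hdet : g.det = 1)
    (hk : IsUnitaryMat k) (hu : IsUpperPos u) (hfac : g = k * u) :
    kᵀ * S * k = S ∧ uᵀ * S * u = S ∧ k.det = 1 ∧ u.det = 1 := by
  exact stmt19' n hn S g k u hS hg hdet hk hu hfac
end
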